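/- arXiv:2308.12136 — 13 statements merged into one kernel-verified Lean document; each statement's English description precedes it below -/
import Mathlib

section
/- If Player I has a winning strategy in the bounding game with respect to a family A ⊆ ω^ω, then A is not unbounded; equivalently, for every unbounded family A ⊆ ω^ω, Player I has no winning strategy in the bounding game with respect to A. Consequently the minimal cardinality of a family A such that Player I has no winning strategy in the bounding game with respect to A equals the bounding number 𝔟. -/
open Cardinal

/-- Player II wins a play of the bounding game with respect to `A`:
`n` is Player I's sequence of moves, `i` is Player II's sequence of moves. -/
def IIWinsBounding (A : Set (ℕ → ℕ)) (n : ℕ → ℕ) (i : ℕ → Bool) : Prop :=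
  {k | i k = true}.Infinite ∧ ∃ g ∈ A, ∀ k, (i k = true ↔ n k < g k)

/-- Player I has a winning strategy in the bounding game with respect to `A`.
A strategy for Player I maps Player II's previous moves to Player I's next move. -/
def IWinStratBounding (A : Set (ℕ → ℕ)) : Prop :=
  ∃ σ : List Bool → ℕ, ∀ i : ℕ → Bool,
    ¬ IIWinsBounding A (fun k => σ ((List.range k).map i)) i

/-- `A ⊆ ω^ω` is an unbounded family (w.r.t. eventual domination `≤*`). -/
def UnboundedFamily (A : Set (ℕ → ℕ)) : Prop :=
  ∀ x : ℕ → ℕ, ∃ y ∈ A, ¬ (∀ᶠ n in Filter.atTop, y n ≤ x n)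

/-- The bounding number 𝔟. -/
noncomputable def frakB : Cardinal :=
  sInf { c | ∃ A : Set (ℕ → ℕ), UnboundedFamily A ∧ #A = c }

noncomputable def bigX (σ : List Bool → ℕ) (k : ℕ) : ℕ :=
  (Finset.univ : Finset (Fin k → Bool)).sup fun f =>
    σ ((List.range k).map fun j => if h : j < k then f ⟨j, h⟩ else false)

lemma le_bigX (σ : List Bool → ℕ) (i : ℕ → Bool) (k : ℕ) :
    σ ((List.range k).map i) ≤ bigX σ k := by
  have h := Finset.le_sup (f := fun f : Fin k → Bool =>
    σ ((List.range k).map fun j => if h : j < k then f ⟨j, h⟩ else false))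
    (Finset.mem_univ (fun j : Fin k => i j))
  have heq : (List.range k).map i
      = (List.range k).map fun j => if h : j < k then (fun j : Fin k => i j) ⟨j, h⟩ else false := by
    apply List.map_congr_left
    intro a ha
    rw [List.mem_range] at ha
    simp [ha]
  rw [heq]
  exact h

def playL (σ : List Bool → ℕ) (g : ℕ → ℕ) : ℕ → List Bool
  | 0 => []
  | k+1 => playL σ g k ++ [decide (σ (playL σ g k) < g k)]

def playI (σ : List Bool → ℕ) (g : ℕ → ℕ) (k : ℕ) : Bool :=
  decide (σ (playL σ g k) < g k)

lemma playL_eq (σ : List Bool → ℕ) (g : ℕ → ℕ) (k : ℕ) :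
    (List.range k).map (playI σ g) = playL σ g k := by
  induction k with
  | zero => simp [playL]
  | succ k ih =>
    rw [List.range_succ, List.map_append, ih]
    simp [playL, playI]

lemma unbounded_no_win : ∀ A : Set (ℕ → ℕ), UnboundedFamily A → ¬ IWinStratBounding A := by
  intro A hA ⟨σ, hσ⟩
  obtain ⟨g, hgA, hg⟩ := hA (bigX σ)
  apply hσ (playI σ g)
  constructor
  · have hfreq : {k | bigX σ k < g k}.Infinite := by
      rw [← Nat.frequently_atTop_iff_infinite]
      rw [Filter.not_eventually] at hg
      exact hg.mono fun n hn => Nat.lt_of_not_le hn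
    apply hfreq.mono
    intro k hk
    simp only [Set.mem_setOf_eq] at hk ⊢
    have : σ ((List.range k).map (playI σ g)) ≤ bigX σ k := le_bigX σ _ k
    rw [playL_eq] at this
    simp only [playI, decide_eq_true_eq]
    exact lt_of_le_of_lt this hk
  · refine ⟨g, hgA, fun k => ?_⟩
    simp [playI, playL_eq]

lemma bounded_win (A : Set (ℕ → ℕ)) (h : ¬ UnboundedFamily A) : IWinStratBounding A := by
  unfold UnboundedFamily at h
  push_neg at h
  obtain ⟨x, hx⟩ := h
  refine ⟨fun s => x s.length, fun i ⟨hinf, g, hgA, hiff⟩ => ?_⟩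
  have hset : {k | i k = true} = {k | x k < g k} := by
    ext k; simpa using (hiff k)
  rw [hset] at hinf
  have := hx g hgA
  rw [Filter.eventually_atTop] at this
  obtain ⟨N, hN⟩ := this
  apply hinf
  apply Set.Finite.subset (Set.finite_Iio N)
  intro k hk
  simp only [Set.mem_setOf_eq] at hk
  by_contra hkN
  exact absurd (hN k (le_of_not_gt hkN)) (not_le_of_gt hk)

theorem stmt0 :
    (∀ A : Set (ℕ → ℕ), UnboundedFamily A → ¬ IWinStratBounding A) ∧
    sInf { c | ∃ A : Set (ℕ → ℕ), ¬ IWinStratBounding A ∧ #A = c } = frakB := by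
  refine ⟨unbounded_no_win, ?_⟩
  unfold frakB
  congr 1
  ext c
  constructor
  · rintro ⟨A, hA, rfl⟩
    exact ⟨A, by_contra fun h => hA (bounded_win A h), rfl⟩
  · rintro ⟨A, hA, rfl⟩
    exact ⟨A, unbounded_no_win A hA, rfl⟩
end

section
/- If Player II has a winning strategy in the bounding game with respect to a family A ⊆ ω^ω, then |A| ≥ 𝔡, where 𝔡 is the dominating number. Hence the minimal cardinality of a family A for which Player II has a winning strategy in the bounding game equals 𝔡. -/
open Cardinal

/-- Player II has a winning strategy in the bounding game with respect to `A`. -/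
def IIWinStratBounding (A : Set (ℕ → ℕ)) : Prop :=
  ∃ τ : List ℕ → Bool, ∀ n : ℕ → ℕ,
    IIWinsBounding A n (fun k => τ ((List.range (k + 1)).map n))

/-- The dominating number 𝔡. -/
noncomputable def frakD : Cardinal :=
  sInf { c | ∃ D : Set (ℕ → ℕ),
    (∀ x : ℕ → ℕ, ∃ y ∈ D, ∀ᶠ n in Filter.atTop, x n ≤ y n) ∧ #D = c }

/-!
Suppose `τ` is a winning strategy for Player II although `|A| < 𝔡`. Player I answers with a
counter-play driven by a sequence `w`: if some move would be answered `0`, play the least such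
move; otherwise (a *forced* position) play `w s`, where `s` counts the earlier forced positions.
As II wins, there are infinitely many forced positions, and the `s`-th of them depends only on
`w 0, …, w (s - 1)`. So for `g ∈ A`, the value of `g` at the `(s+1)`-st forced position is bounded
by a function of `p` as soon as `w 0, …, w s ≤ p`. Fewer than `𝔡` functions do not dominate, which
yields a monotone `z` with `z (s + 1)` above the bound at `z s` for each `g` and some `s`. Against
the counter-play driven by `z`, II's witness `g` would have to exceed I's move `z (s + 1)` at the
`(s+1)`-st forced position, and it does not.

Conversely, for dominating `D`, II wins by always answering `1` with respect to the translates
`y + c` (`y ∈ D`, `c ∈ ℕ`), a family of size `𝔡`.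
-/

open Filter

def IsDominating (D : Set (ℕ → ℕ)) : Prop :=
  ∀ x : ℕ → ℕ, ∃ y ∈ D, ∀ᶠ n in atTop, x n ≤ y n

section Dominating

variable {D G : Set (ℕ → ℕ)}

lemma frakD_le_mk (hD : IsDominating D) : frakD ≤ #D :=
  csInf_le (s := {c | ∃ D, IsDominating D ∧ #D = c}) (OrderBot.bddBelow _) ⟨D, hD, rfl⟩

lemma exists_isDominating_mk_eq_frakD : ∃ D, IsDominating D ∧ #D = frakD := by
  have hne : {c | ∃ D, IsDominating D ∧ #D = c}.Nonempty :=
    ⟨_, Set.univ, fun x => ⟨x, Set.mem_univ x, .of_forall fun _ => le_rfl⟩, rfl⟩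
  exact csInf_mem (s := {c | ∃ D, IsDominating D ∧ #D = c}) hne

lemma IsDominating.aleph0_le_mk (hD : IsDominating D) : ℵ₀ ≤ #D := by
  by_contra! h
  have hfin : D.Finite := Cardinal.lt_aleph0_iff_set_finite.mp h
  obtain ⟨y, hy, hev⟩ := hD fun n => ∑ y ∈ hfin.toFinset, y n + 1
  obtain ⟨n, hn⟩ := hev.exists
  have := Finset.single_le_sum (f := fun y : ℕ → ℕ => y n) (fun _ _ => Nat.zero_le _)
    (hfin.mem_toFinset.mpr hy)
  omega

lemma aleph0_le_frakD : ℵ₀ ≤ frakD := by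
  obtain ⟨D, hD, hcard⟩ := exists_isDominating_mk_eq_frakD
  rw [← hcard]
  exact hD.aleph0_le_mk

lemma exists_frequently_lt_of_mk_lt_frakD (hG : #G < frakD) :
    ∃ x : ℕ → ℕ, ∀ y ∈ G, ∃ᶠ m in atTop, y m < x m := by
  by_contra! h
  exact (frakD_le_mk fun x => by simpa only [not_frequently, not_lt] using h x).not_gt hG

lemma IsDominating.exists_lt_add_const (hD : IsDominating D) (x : ℕ → ℕ) :
    ∃ y ∈ D, ∃ c, ∀ k, x k < y k + c := by
  obtain ⟨y, hy, hev⟩ := hD x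
  obtain ⟨N, hN⟩ := eventually_atTop.mp hev
  refine ⟨y, hy, (Finset.range N).sup x + 1, fun k => ?_⟩
  by_cases hk : N ≤ k
  · have := hN k hk
    omega
  · have : x k ≤ (Finset.range N).sup x := Finset.le_sup (by simpa using hk)
    omega

end Dominating

lemma exists_monotone_escape {ι : Type} (h : ι → ℕ → ℕ) (hι : #ι < frakD) :
    ∃ z : ℕ → ℕ, Monotone z ∧ (∀ k, k ≤ z k) ∧ ∀ i, ∃ s, h i (z s) < z (s + 1) := by
  set H : ι → ℕ → ℕ := fun i p => (Finset.range (p + 1)).sup (h i)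
  have hH_mono : ∀ i, Monotone (H i) := fun i _ _ hpq =>
    Finset.sup_mono (Finset.range_subset_range.mpr (by omega))
  have hh_le : ∀ i p, h i p ≤ H i p := fun i p => Finset.le_sup (by simp)
  obtain ⟨x, hx⟩ := exists_frequently_lt_of_mk_lt_frakD
    (G := Set.range fun i m => (H i)^[m] 0) (Cardinal.mk_range_le.trans_lt hι)
  set z : ℕ → ℕ := fun m => ∑ j ∈ Finset.range m, (x (j + 1) + 1)
  have hz_succ : ∀ m, z (m + 1) = z m + x (m + 1) + 1 := fun m => Finset.sum_range_succ _ _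
  refine ⟨z, monotone_nat_of_le_succ fun m => by have := hz_succ m; omega, fun k => ?_, fun i => ?_⟩
  · induction k with
    | zero => exact Nat.zero_le _
    | succ k ih =>
      have := hz_succ k
      omega
  by_contra! hstuck
  -- `z` stays below the iterates of `H i`, which `x` escapes.
  have hz_le : ∀ m, z m ≤ (H i)^[m] 0 := fun m =>
    (hH_mono i).seq_le_seq (x := z) (y := fun m => (H i)^[m] 0) m le_rfl
      (fun k _ => (hstuck k).trans (hh_le i _)) (fun k _ => (Function.iterate_succ_apply' _ _ _).ge)
  obtain ⟨m, hm, hm1⟩ := ((hx _ ⟨i, rfl⟩).and_eventually (eventually_ge_atTop 1)).exists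
  obtain ⟨m, rfl⟩ : ∃ m', m = m' + 1 := ⟨m - 1, by omega⟩
  beta_reduce at hm
  have := hz_le (m + 1)
  have := hz_succ m
  omega

namespace BoundingGame

attribute [local instance] Classical.propDecidable

variable (τ : List ℕ → Bool)

def IsForced (l : List ℕ) : Prop := ∀ v, τ (l ++ [v]) = true

/-- A state is the history so far together with the number of forced positions in it. -/
noncomputable def counterMove (w : ℕ → ℕ) (p : List ℕ × ℕ) : ℕ :=
  if h : ∃ v, τ (p.1 ++ [v]) = false then Nat.find h else w p.2

noncomputable def counterState (w : ℕ → ℕ) : ℕ → List ℕ × ℕ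
  | 0 => ([], 0)
  | k + 1 => ((counterState w k).1 ++ [counterMove τ w (counterState w k)],
      if IsForced τ (counterState w k).1 then (counterState w k).2 + 1 else (counterState w k).2)

noncomputable def counterPlay (w : ℕ → ℕ) (k : ℕ) : ℕ := counterMove τ w (counterState τ w k)

def ForcedAt (w : ℕ → ℕ) (k : ℕ) : Prop := IsForced τ (counterState τ w k).1

variable {τ}

lemma answer_counterMove_eq_true_iff {w : ℕ → ℕ} {p : List ℕ × ℕ} :
    τ (p.1 ++ [counterMove τ w p]) = true ↔ IsForced τ p.1 := by
  by_cases h : ∃ v, τ (p.1 ++ [v]) = false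
  · rw [counterMove, dif_pos h, Nat.find_spec h]
    obtain ⟨v, hv⟩ := h
    exact iff_of_false Bool.false_ne_true fun hf => by simp [hf v] at hv
  · simp only [not_exists, Bool.not_eq_false] at h
    exact iff_of_true (h _) h

lemma counterMove_of_isForced {w : ℕ → ℕ} {p : List ℕ × ℕ} (hp : IsForced τ p.1) :
    counterMove τ w p = w p.2 :=
  dif_neg (by rintro ⟨v, hv⟩; simp [hp v] at hv)

lemma counterMove_congr {w w' : ℕ → ℕ} {p : List ℕ × ℕ} (h : IsForced τ p.1 → w p.2 = w' p.2) :
    counterMove τ w p = counterMove τ w' p := by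
  by_cases hp : IsForced τ p.1
  · rw [counterMove_of_isForced hp, counterMove_of_isForced hp, h hp]
  · have : ∃ v, τ (p.1 ++ [v]) = false := by simpa [IsForced] using hp
    simp only [counterMove, dif_pos this]

lemma counterState_fst (w : ℕ → ℕ) (k : ℕ) :
    (counterState τ w k).1 = (List.range k).map (counterPlay τ w) := by
  induction k with
  | zero => rfl
  | succ k ih => rw [List.range_succ, List.map_append, ← ih]; rfl

lemma counterState_succ_snd (w : ℕ → ℕ) (k : ℕ) :
    (counterState τ w (k + 1)).2 = (counterState τ w k).2 + if ForcedAt τ w k then 1 else 0 := by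
  change (if ForcedAt τ w k then _ + 1 else _) = _
  split_ifs <;> rfl

lemma counterState_snd (w : ℕ → ℕ) (k : ℕ) :
    (counterState τ w k).2 = Nat.count (ForcedAt τ w) k := by
  induction k with
  | zero => rfl
  | succ k ih => rw [counterState_succ_snd, ih, Nat.count_succ]

lemma answer_counterPlay_eq_true_iff (w : ℕ → ℕ) (k : ℕ) :
    τ ((List.range (k + 1)).map (counterPlay τ w)) = true ↔ ForcedAt τ w k := by
  rw [List.range_succ, List.map_append, ← counterState_fst]
  exact answer_counterMove_eq_true_iff

lemma counterPlay_nth_forcedAt {w : ℕ → ℕ} (hinf : (Set.ofPred (ForcedAt τ w)).Infinite) (s : ℕ) :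
    counterPlay τ w (Nat.nth (ForcedAt τ w) s) = w s := by
  rw [counterPlay, counterMove_of_isForced (Nat.nth_mem_of_infinite hinf s), counterState_snd,
    Nat.count_nth_of_infinite hinf]

/-- Up to the `s`-th forced position, the counter-play only reads `w` below `s`. -/
lemma counterState_congr {w w' : ℕ → ℕ} {s : ℕ} (hw : ∀ i < s, w i = w' i) :
    ∀ k, (counterState τ w k).2 ≤ s → counterState τ w k = counterState τ w' k := by
  intro k
  induction k with
  | zero => exact fun _ => rfl
  | succ k ih =>
    intro hk
    rw [counterState_succ_snd] at hk
    have hk' : (counterState τ w k).2 ≤ s := by omega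
    have hmove : counterMove τ w (counterState τ w k) = counterMove τ w' (counterState τ w k) :=
      counterMove_congr fun hf => hw _ (by rw [if_pos (show ForcedAt τ w k from hf)] at hk; omega)
    simp only [counterState, ← ih hk', hmove]

lemma nth_forcedAt_congr {w w' : ℕ → ℕ} {s : ℕ} (hinf : (Set.ofPred (ForcedAt τ w)).Infinite)
    (hw : ∀ i < s, w i = w' i) : Nat.nth (ForcedAt τ w') s = Nat.nth (ForcedAt τ w) s := by
  set K := Nat.nth (ForcedAt τ w) s
  have hcount : Nat.count (ForcedAt τ w) K = s := Nat.count_nth_of_infinite hinf s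
  have hforced : ∀ j ≤ K, ForcedAt τ w j ↔ ForcedAt τ w' j := fun j hj => by
    rw [ForcedAt, ForcedAt, counterState_congr hw j
      (by rw [counterState_snd, ← hcount]; exact Nat.count_monotone _ hj)]
  have hcount' : Nat.count (ForcedAt τ w') K = s := by
    rw [← hcount, Nat.count_eq_card_filter_range, Nat.count_eq_card_filter_range]
    exact congrArg _ (Finset.filter_congr fun j hj =>
      (hforced j (Finset.mem_range.mp hj).le).symm)
  rw [← hcount']
  exact Nat.nth_count ((hforced K le_rfl).mp (Nat.nth_mem_of_infinite hinf s))

def extendByZero {p : ℕ} (t : Fin (p + 1) → Fin (p + 1)) (i : ℕ) : ℕ :=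
  if h : i < p + 1 then t ⟨i, h⟩ else 0

/-- Bounds `g` at the `(s+1)`-st forced position (`s ≤ p`) of every counter-play driven by values
`≤ p`. -/
noncomputable def forcedBound (τ : List ℕ → Bool) (g : ℕ → ℕ) (p : ℕ) : ℕ :=
  Finset.univ.sup fun st : Fin (p + 1) × (Fin (p + 1) → Fin (p + 1)) =>
    g (Nat.nth (ForcedAt τ (extendByZero st.2)) (st.1 + 1))

lemma le_forcedBound {z : ℕ → ℕ} (hz_mono : Monotone z) (hz_ge : ∀ k, k ≤ z k)
    (hinf : (Set.ofPred (ForcedAt τ z)).Infinite) (g : ℕ → ℕ) (s : ℕ) :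
    g (Nat.nth (ForcedAt τ z) (s + 1)) ≤ forcedBound τ g (z s) := by
  set p := z s
  have hs : s < p + 1 := Nat.lt_succ_of_le (hz_ge s)
  set t : Fin (p + 1) → Fin (p + 1) := fun j => ⟨min (z j) p, by omega⟩
  have hagree : ∀ i < s + 1, z i = extendByZero t i := fun i hi => by
    have := hz_mono (Nat.le_of_lt_succ hi)
    simp only [extendByZero, t, dif_pos (hi.trans_le hs)]
    omega
  rw [← nth_forcedAt_congr hinf hagree]
  exact Finset.le_sup (f := fun st : Fin (p + 1) × (Fin (p + 1) → Fin (p + 1)) =>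
    g (Nat.nth (ForcedAt τ (extendByZero st.2)) (st.1 + 1))) (Finset.mem_univ (⟨s, hs⟩, t))

end BoundingGame

open BoundingGame in
theorem frakD_le_mk_of_iiWinStratBounding {A : Set (ℕ → ℕ)} (hA : IIWinStratBounding A) :
    frakD ≤ #A := by
  by_contra! hlt
  obtain ⟨τ, hτ⟩ := hA
  obtain ⟨z, hz_mono, hz_ge, hz_esc⟩ :=
    exists_monotone_escape (fun g : A => forcedBound τ g) hlt
  obtain ⟨hinf, g, hgA, hg⟩ := hτ (counterPlay τ z)
  simp only [answer_counterPlay_eq_true_iff] at hinf hg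
  obtain ⟨s, hs⟩ : ∃ s, forcedBound τ g (z s) < z (s + 1) := hz_esc ⟨g, hgA⟩
  set K := Nat.nth (ForcedAt τ z) (s + 1)
  have hK : counterPlay τ z K < g K := (hg K).mp (Nat.nth_mem_of_infinite hinf (s + 1))
  rw [counterPlay_nth_forcedAt hinf] at hK
  have hbound : g K ≤ forcedBound τ g (z s) := le_forcedBound hz_mono hz_ge hinf g s
  omega

lemma iiWinStratBounding_range_add_const {D : Set (ℕ → ℕ)} (hD : IsDominating D) :
    IIWinStratBounding (Set.range fun yc : D × ℕ => fun k => (yc.1 : ℕ → ℕ) k + yc.2) := by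
  refine ⟨fun _ => true, fun n => ⟨?_, ?_⟩⟩
  · simpa using Set.infinite_univ
  · obtain ⟨y, hy, c, hc⟩ := hD.exists_lt_add_const n
    exact ⟨_, ⟨(⟨y, hy⟩, c), rfl⟩, fun k => iff_of_true rfl (hc k)⟩

theorem stmt2 :
    (∀ A : Set (ℕ → ℕ), IIWinStratBounding A → frakD ≤ #A) ∧
    sInf { c | ∃ A : Set (ℕ → ℕ), IIWinStratBounding A ∧ #A = c } = frakD := by
  refine ⟨fun _ => frakD_le_mk_of_iiWinStratBounding, ?_⟩
  obtain ⟨D, hD, hDcard⟩ := exists_isDominating_mk_eq_frakD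
  set A₀ := Set.range fun yc : D × ℕ => fun k => (yc.1 : ℕ → ℕ) k + yc.2
  have hwin : IIWinStratBounding A₀ := iiWinStratBounding_range_add_const hD
  have hcard : #A₀ = frakD := by
    refine le_antisymm (Cardinal.mk_range_le.trans ?_) (frakD_le_mk_of_iiWinStratBounding hwin)
    rw [Cardinal.mk_prod, Cardinal.lift_id, Cardinal.mk_nat, Cardinal.lift_aleph0, hDcard,
      Cardinal.mul_eq_left aleph0_le_frakD aleph0_le_frakD aleph0_ne_zero]
  refine le_antisymm (csInf_le (OrderBot.bddBelow _) ⟨_, hwin, hcard⟩) ?_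
  refine le_csInf ⟨_, _, hwin, hcard⟩ ?_
  rintro _ ⟨A, hA, rfl⟩
  exact frakD_le_mk_of_iiWinStratBounding hA
end

section
/- For every unbounded family A ⊆ ω^ω, Player I has no winning strategy in the bounding* game with respect to A. Consequently the minimal cardinality of a family A such that Player I has no winning strategy in the bounding* game with respect to A equals 𝔟. -/
open Cardinal

/-- Player II wins a play of the bounding* game with respect to `A`:
`n` is Player I's sequence of moves, `m` is Player II's sequence of moves. -/
def IIWinsBoundingStar (A : Set (ℕ → ℕ)) (n : ℕ → ℕ) (m : ℕ → ℕ) : Prop :=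
  m ∈ A ∧ {k | n k < m k}.Infinite

/-- Player I has a winning strategy in the bounding* game with respect to `A`. -/
def IWinStratBoundingStar (A : Set (ℕ → ℕ)) : Prop :=
  ∃ σ : List ℕ → ℕ, ∀ m : ℕ → ℕ,
    ¬ IIWinsBoundingStar A (fun k => σ ((List.range k).map m)) m

/-- Max of σ's responses over the finitely branching tree of σ-bounded plays. -/
def Mfun (σ : List ℕ → ℕ) : ℕ → List ℕ → ℕ
  | 0, t => σ t
  | (k+1), t => (Finset.range (σ t + 1)).sup (fun v => Mfun σ k (t ++ [v]))

lemma Mfun_bound (σ : List ℕ → ℕ) (y : ℕ → ℕ) :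
    ∀ k N, (∀ j, N ≤ j → y j ≤ σ ((List.range j).map y)) →
      y (N + k) ≤ Mfun σ k ((List.range N).map y) := by
  intro k
  induction k with
  | zero => intro N h; simpa [Mfun] using h N le_rfl
  | succ k ih =>
    intro N h
    have h2 := ih (N+1) (fun j hj => h j (by omega))
    have h3 : (List.range (N+1)).map y = (List.range N).map y ++ [y N] := by
      rw [List.range_succ, List.map_append]; simp
    rw [h3] at h2
    have h4 : y N ∈ Finset.range (σ ((List.range N).map y) + 1) := by
      simp only [Finset.mem_range, Nat.lt_succ_iff]; exact h N le_rfl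
    calc y (N + (k+1)) = y ((N+1)+k) := by ring_nf
      _ ≤ Mfun σ k (((List.range N).map y) ++ [y N]) := h2
      _ ≤ Mfun σ (k+1) ((List.range N).map y) :=
          Finset.le_sup (f := fun v => Mfun σ k (((List.range N).map y) ++ [v])) h4

lemma unbounded_no_strat (A : Set (ℕ → ℕ)) (hA : UnboundedFamily A) :
    ¬ IWinStratBoundingStar A := by
  rintro ⟨σ, hσ⟩
  set x : ℕ → ℕ := fun k => (Finset.range (k+1)).sup (fun j =>
    (Finset.range (k+1)).sup (fun i =>
      Mfun σ i ((Encodable.decode (α := List ℕ) j).getD []))) with hx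
  have key : ∀ y ∈ A, ∀ᶠ n in Filter.atTop, y n ≤ x n := by
    intro y hy
    have hns := hσ y
    have hfin : {k | σ ((List.range k).map y) < y k}.Finite :=
      Set.not_infinite.mp (fun hinf => hns ⟨hy, hinf⟩)
    obtain ⟨N, hN⟩ := hfin.bddAbove
    have hdom : ∀ j, N + 1 ≤ j → y j ≤ σ ((List.range j).map y) := by
      intro j hj
      by_contra hlt
      have := hN (Set.mem_setOf.mpr (by omega : σ ((List.range j).map y) < y j))
      omega
    set t : List ℕ := (List.range (N+1)).map y with ht
    set j₀ : ℕ := Encodable.encode t with hj₀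
    rw [Filter.eventually_atTop]
    refine ⟨max (N+1) j₀, fun n hn => ?_⟩
    have h1 : N + 1 ≤ n := le_trans (le_max_left _ _) hn
    have h2 : j₀ ≤ n := le_trans (le_max_right _ _) hn
    have hb := Mfun_bound σ y (n - (N+1)) (N+1) hdom
    have hyn : y n = y ((N+1) + (n - (N+1))) := by congr 1; omega
    rw [hyn]
    refine le_trans hb ?_
    have hdec : (Encodable.decode (α := List ℕ) j₀).getD [] = t := by
      rw [hj₀, Encodable.encodek]; rfl
    calc Mfun σ (n - (N+1)) t
        = Mfun σ (n - (N+1)) ((Encodable.decode (α := List ℕ) j₀).getD []) := by rw [hdec]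
      _ ≤ (Finset.range (n+1)).sup (fun i =>
            Mfun σ i ((Encodable.decode (α := List ℕ) j₀).getD [])) :=
          Finset.le_sup (f := fun i => Mfun σ i ((Encodable.decode (α := List ℕ) j₀).getD []))
            (Finset.mem_range.mpr (Nat.lt_succ_of_le (Nat.sub_le n (N+1))))
      _ ≤ x n := Finset.le_sup (f := fun j => (Finset.range (n+1)).sup (fun i =>
            Mfun σ i ((Encodable.decode (α := List ℕ) j).getD [])))
            (Finset.mem_range.mpr (Nat.lt_succ_of_le h2))
  obtain ⟨y, hy, hny⟩ := hA x
  exact hny (key y hy)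

lemma bounded_strat (A : Set (ℕ → ℕ)) (hA : ¬ UnboundedFamily A) :
    IWinStratBoundingStar A := by
  rw [UnboundedFamily] at hA
  push_neg at hA
  obtain ⟨x, hx⟩ := hA
  refine ⟨fun s => x s.length, fun m hm => ?_⟩
  obtain ⟨hmA, hinf⟩ := hm
  have hev := hx m hmA
  rw [Filter.eventually_atTop] at hev
  obtain ⟨N, hN⟩ := hev
  have hsub : {k | (fun k => x ((List.range k).map m).length) k < m k} ⊆ Set.Iio N := by
    intro k hk
    simp only [Set.mem_setOf_eq, List.length_map, List.length_range] at hk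
    rw [Set.mem_Iio]
    by_contra h
    push_neg at h
    exact absurd (hN k h) (by omega)
  exact ((Set.finite_Iio N).subset hsub).not_infinite hinf

theorem stmt3 :
    (∀ A : Set (ℕ → ℕ), UnboundedFamily A → ¬ IWinStratBoundingStar A) ∧
    sInf { c | ∃ A : Set (ℕ → ℕ), ¬ IWinStratBoundingStar A ∧ #A = c } = frakB := by
  have equiv : ∀ A : Set (ℕ → ℕ), ¬ IWinStratBoundingStar A ↔ UnboundedFamily A :=
    fun A => ⟨fun h => by_contra fun hu => h (bounded_strat A hu), unbounded_no_strat A⟩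
  refine ⟨unbounded_no_strat, ?_⟩
  rw [frakB]
  congr 1
  ext c
  simp only [Set.mem_setOf_eq, equiv]
end

section
/- If Player II has a winning strategy in the bounding* game with respect to a family A ⊆ ω^ω, then |A| = 𝔠 (the cardinality of the continuum). Hence the minimal size of such a family is 𝔠. -/
open Cardinal

/-- Player II has a winning strategy in the bounding* game with respect to `A`. -/
def IIWinStratBoundingStar (A : Set (ℕ → ℕ)) : Prop :=
  ∃ τ : List ℕ → ℕ, ∀ n : ℕ → ℕ,
    IIWinsBoundingStar A n (fun k => τ ((List.range (k + 1)).map n))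

/-- Splitting lemma: given a winning strategy `τ`, from any finite position of Player I
there are two equal-length extensions whose induced responses of II differ somewhere. -/
lemma bstar_split (A : Set (ℕ → ℕ)) (τ : List ℕ → ℕ)
    (hτ : ∀ n : ℕ → ℕ, IIWinsBoundingStar A n (fun k => τ ((List.range (k + 1)).map n)))
    (s : List ℕ) :
    ∃ a b : List ℕ, a.length = b.length ∧
      ∃ k, s.length ≤ k ∧ k < s.length + a.length ∧
        τ ((s ++ a).take (k+1)) ≠ τ ((s ++ b).take (k+1)) := by
  by_contra hcon
  push_neg at hcon
  classical
  set c : ℕ → ℕ := fun k => τ ((s ++ List.replicate (k + 1 - s.length) 0).take (k+1)) with hc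
  set n : ℕ → ℕ := fun k => if h : k < s.length then s[k] else c k with hn
  have key : ∀ k, s.length ≤ k → τ ((List.range (k+1)).map n) = n k := by
    intro k hk
    set L := (List.range (k+1)).map n with hL
    have hlen : L.length = k + 1 := by simp [hL]
    have hsle : s.length ≤ k + 1 := by omega
    have htake : L.take s.length = s := by
      apply List.ext_getElem
      · simp [hlen]; omega
      · intro i h1 h2
        have hiL : i < L.length := by simp [hlen] at *; omega
        have hi : i < s.length := h2
        rw [List.getElem_take]
        simp only [hL, List.getElem_map, List.getElem_range]
        simp [hn, hi]
    have hdec : s ++ L.drop s.length = L := by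
      conv_rhs => rw [← List.take_append_drop s.length L, htake]
    have hlen2 : (L.drop s.length).length = k + 1 - s.length := by simp [hlen]
    have heq := hcon (L.drop s.length) (List.replicate (k+1 - s.length) 0)
      (by simp [hlen2]) k hk (by omega)
    rw [hdec] at heq
    rw [List.take_of_length_le (le_of_eq hlen)] at heq
    rw [heq]
    simp only [hn, hc]
    rw [dif_neg (by omega)]
  have hfin : {k | n k < τ ((List.range (k+1)).map n)}.Finite := by
    apply Set.Finite.subset (Set.finite_Iio s.length)
    intro k hk
    by_contra h
    simp only [Set.mem_Iio, not_lt] at h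
    rw [Set.mem_setOf_eq, key k h] at hk
    exact lt_irrefl _ hk
  exact hfin.not_infinite ((hτ n).2)

lemma continuum_le_bstar (A : Set (ℕ → ℕ)) (h : IIWinStratBoundingStar A) :
    Cardinal.continuum ≤ #A := by
  classical
  obtain ⟨τ, hτ⟩ := h
  choose F1 F2 hF K hK1 hK2 hKne using bstar_split A τ hτ
  set S : (ℕ → Bool) → ℕ → List ℕ :=
    fun x => Nat.rec [] (fun j s => s ++ (if x j then F1 s else F2 s)) with hS
  have Ssucc : ∀ x j, S x (j+1) = S x j ++ (if x j then F1 (S x j) else F2 (S x j)) :=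
    fun _ _ => rfl
  have Fpos : ∀ s : List ℕ, 0 < (F1 s).length := by
    intro s; have := hK1 s; have := hK2 s; omega
  have Slen_succ : ∀ x j, (S x (j+1)).length = (S x j).length + (F1 (S x j)).length := by
    intro x j; rw [Ssucc]; cases hxj : x j <;> simp [hF]
  have Slen : ∀ x j, j ≤ (S x j).length := by
    intro x j
    induction j with
    | zero => simp
    | succ j ih => rw [Slen_succ]; have := Fpos (S x j); omega
  have Spre : ∀ x j j', j ≤ j' → S x j <+: S x j' := by
    intro x j j' h
    induction j', h using Nat.le_induction with
    | base => exact List.prefix_refl _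
    | succ j' hj ih => exact ih.trans (by rw [Ssucc]; exact List.prefix_append _ _)
  set nx : (ℕ → Bool) → ℕ → ℕ := fun x k => (S x (k+1)).getD k 0 with hnx
  have nx_eq : ∀ x j k, (hk : k < (S x j).length) → nx x k = (S x j)[k] := by
    intro x j k hk
    have h1 : k < (S x (k+1)).length := lt_of_lt_of_le (Nat.lt_succ_self k) (Slen x (k+1))
    have hgd : nx x k = (S x (k+1))[k] := List.getD_eq_getElem _ 0 h1
    rcases le_total (k+1) j with h | h
    · rw [hgd, (Spre x (k+1) j h).getElem h1]
    · rw [hgd, ← (Spre x j (k+1) h).getElem hk]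
  have map_eq : ∀ x j k, k < (S x j).length →
      (List.range (k+1)).map (nx x) = (S x j).take (k+1) := by
    intro x j k hk
    apply List.ext_getElem
    · simp; omega
    · intro i h1 h2
      simp only [List.getElem_map, List.getElem_range, List.getElem_take]
      exact nx_eq x j i (by simp at h1; omega)
  have agree : ∀ (x y : ℕ → Bool) j, (∀ i, i < j → x i = y i) → S x j = S y j := by
    intro x y j h
    induction j with
    | zero => rfl
    | succ j ih =>
      have hs : S x j = S y j := ih (fun i hi => h i (Nat.lt_succ_of_lt hi))
      rw [Ssucc, Ssucc, hs, h j (Nat.lt_succ_self j)]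
  set m : (ℕ → Bool) → ℕ → ℕ := fun x k => τ ((List.range (k+1)).map (nx x)) with hm
  have hmA : ∀ x, m x ∈ A := fun x => (hτ (nx x)).1
  have hinj : Function.Injective (fun x => (⟨m x, hmA x⟩ : A)) := by
    intro x y hxy
    simp only [Subtype.mk_eq_mk] at hxy
    by_contra hne
    have hex : ∃ j, x j ≠ y j := by
      by_contra h; push_neg at h; exact hne (funext h)
    set j := Nat.find hex with hjdef
    have hj : x j ≠ y j := Nat.find_spec hex
    have hltj : ∀ i, i < j → x i = y i := by
      intro i hi
      by_contra h
      exact Nat.find_min hex hi h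
    have hsj : S x j = S y j := agree x y j hltj
    set s := S x j with hs
    have hkx : K s < (S x (j+1)).length := by
      rw [Slen_succ]; exact hK2 s
    have hky : K s < (S y (j+1)).length := by
      rw [Slen_succ, ← hsj]; exact hK2 s
    have hmx : m x (K s) = τ ((S x (j+1)).take (K s + 1)) := by
      simp only [hm]; rw [map_eq x (j+1) (K s) hkx]
    have hmy : m y (K s) = τ ((S y (j+1)).take (K s + 1)) := by
      simp only [hm]; rw [map_eq y (j+1) (K s) hky]
    have hxy' : m x (K s) = m y (K s) := by rw [hxy]
    rw [hmx, hmy, Ssucc, Ssucc, ← hsj] at hxy'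
    cases hbx : x j <;> cases hby : y j
    · rw [hbx, hby] at hj; exact hj rfl
    · rw [hbx, hby] at hxy'
      simp only [Bool.false_eq_true, if_false, if_true] at hxy'
      exact (hKne s) hxy'.symm
    · rw [hbx, hby] at hxy'
      simp only [Bool.false_eq_true, if_false, if_true] at hxy'
      exact (hKne s) hxy'
    · rw [hbx, hby] at hj; exact hj rfl
  calc Cardinal.continuum = #(ℕ → Bool) := by
        rw [Cardinal.mk_arrow]; simp [Cardinal.two_power_aleph0]
    _ ≤ #A := Cardinal.mk_le_of_injective hinj

theorem stmt4 :
    (∀ A : Set (ℕ → ℕ), IIWinStratBoundingStar A → #A = Cardinal.continuum) ∧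
    sInf { c | ∃ A : Set (ℕ → ℕ), IIWinStratBoundingStar A ∧ #A = c } =
      Cardinal.continuum := by
  have hnatfun : #(ℕ → ℕ) = Cardinal.continuum := by
    rw [Cardinal.mk_arrow]; simp [Cardinal.aleph0_power_aleph0]
  have hmain : ∀ A : Set (ℕ → ℕ), IIWinStratBoundingStar A → #A = Cardinal.continuum := by
    intro A hA
    refine le_antisymm ?_ (continuum_le_bstar A hA)
    calc #A ≤ #(ℕ → ℕ) := Cardinal.mk_set_le A
      _ = Cardinal.continuum := hnatfun
  refine ⟨hmain, ?_⟩
  have hexample : IIWinStratBoundingStar (Set.univ : Set (ℕ → ℕ)) := by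
    refine ⟨fun s => s.getLast?.getD 0 + 1, fun n => ⟨trivial, ?_⟩⟩
    have h1 : ∀ k, ((List.range (k+1)).map n).getLast?.getD 0 = n k := by
      intro k
      rw [List.range_succ, List.map_append]
      show (List.map n (List.range k) ++ [n k]).getLast?.getD 0 = n k
      rw [List.getLast?_concat]
      rfl
    have h2 : ∀ k, n k < ((List.range (k+1)).map n).getLast?.getD 0 + 1 := by
      intro k; rw [h1 k]; omega
    exact Set.infinite_univ.mono (fun k _ => h2 k)
  have hset : { c | ∃ A : Set (ℕ → ℕ), IIWinStratBoundingStar A ∧ #A = c } =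
      {Cardinal.continuum} := by
    ext c
    constructor
    · rintro ⟨A, hA, rfl⟩
      exact hmain A hA
    · rintro rfl
      exact ⟨Set.univ, hexample, by rw [Cardinal.mk_univ, hnatfun]⟩
  rw [hset, csInf_singleton]
end

section
/- The minimal cardinality of a family A ⊆ ω^ω such that Player I has no winning strategy in the dominating* game with respect to A is at most 𝔡. In particular, given a dominating family F ⊆ ω^ω and a bijection π : ω → ω^{<ω}, the family A = { g' : g ∈ F }, where g' is defined recursively so that g(π⁻¹(g'↾n)) < g'(n) for all n, witnesses that Player I has no winning strategy. -/
open Cardinal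

/-- Player II wins a play of the dominating* game with respect to `A`:
`n` is Player I's sequence of moves, `m` is Player II's sequence of moves. -/
def IIWinsDominatingStar (A : Set (ℕ → ℕ)) (n : ℕ → ℕ) (m : ℕ → ℕ) : Prop :=
  m ∈ A ∧ ∀ᶠ k in Filter.atTop, n k < m k

/-- Player I has a winning strategy in the dominating* game with respect to `A`. -/
def IWinStratDominatingStar (A : Set (ℕ → ℕ)) : Prop :=
  ∃ σ : List ℕ → ℕ, ∀ m : ℕ → ℕ,
    ¬ IIWinsDominatingStar A (fun k => σ ((List.range k).map m)) m

/-- The list of Player II's first `n` moves following `g`. -/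
def Lst (g : ℕ → ℕ) : ℕ → List ℕ
  | 0 => []
  | n + 1 => Lst g n ++ [g (Encodable.encode (Lst g n)) + 1]

/-- The modified function `g'`. -/
def dprime (g : ℕ → ℕ) (n : ℕ) : ℕ := g (Encodable.encode (Lst g n)) + 1

lemma Lst_length (g : ℕ → ℕ) : ∀ n, (Lst g n).length = n
  | 0 => rfl
  | n + 1 => by simp [Lst, Lst_length g n]

lemma range_map_dprime (g : ℕ → ℕ) : ∀ n, (List.range n).map (dprime g) = Lst g n
  | 0 => rfl
  | n + 1 => by
      rw [List.range_succ, List.map_append, range_map_dprime g n]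
      rfl

lemma Lst_injective (g : ℕ → ℕ) : Function.Injective (Lst g) := by
  intro a b h
  have := congrArg List.length h
  rwa [Lst_length, Lst_length] at this

theorem stmt5 :
    sInf { c | ∃ A : Set (ℕ → ℕ), ¬ IWinStratDominatingStar A ∧ #A = c } ≤ frakD := by
  apply le_csInf
  · exact ⟨#(Set.univ : Set (ℕ → ℕ)), Set.univ,
      fun x => ⟨x, Set.mem_univ x, Filter.Eventually.of_forall fun n => le_rfl⟩, rfl⟩
  rintro c ⟨D, hdom, rfl⟩
  have key : ¬ IWinStratDominatingStar (dprime '' D) := by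
    rintro ⟨σ, hσ⟩
    obtain ⟨g, hgD, hg⟩ := hdom (fun k => σ (Denumerable.ofNat (List ℕ) k))
    refine hσ (dprime g) ⟨⟨g, hgD, rfl⟩, ?_⟩
    obtain ⟨N, hN⟩ := Filter.eventually_atTop.mp hg
    have hinj : Function.Injective (fun k => Encodable.encode (Lst g k)) :=
      fun a b h => Lst_injective g (Encodable.encode_injective h)
    have htend : Filter.Tendsto (fun k => Encodable.encode (Lst g k))
        Filter.atTop Filter.atTop := by
      rw [← Nat.cofinite_eq_atTop]
      exact hinj.tendsto_cofinite
    filter_upwards [htend.eventually_ge_atTop N] with k hk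
    rw [range_map_dprime g k]
    have := hN _ hk
    simp only [Denumerable.ofNat_encode] at this
    calc σ (Lst g k) ≤ g (Encodable.encode (Lst g k)) := this
      _ < dprime g k := Nat.lt_succ_self _
  calc sInf { c | ∃ A : Set (ℕ → ℕ), ¬ IWinStratDominatingStar A ∧ #A = c }
      ≤ #(dprime '' D) := csInf_le' ⟨dprime '' D, key, rfl⟩
    _ ≤ #D := Cardinal.mk_image_le
end

section
/- If Player I has no winning strategy in the reaping game with respect to A ⊆ [ω]^ω, then |A| ≥ 𝔯 and |A| ≥ 𝔡. Hence the minimal cardinality of a family A with this property is at least max{𝔯, 𝔡}. -/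
/-!
Both bounds come from strategies for Player I that Player II must be able to beat.

For `𝔯`: if Player I simply enumerates an infinite `x`, a winning answer of Player II is some
`B ∈ A` reaping `x`; a finite `x` is handled through its complement.

For `𝔡`: given `f`, Player I moves one step up after each answer `0` and jumps far beyond `f`
after each answer `1`. If Player II wins with `B`, then `B` cannot be almost disjoint from the
play (else Player I eventually moves one step at a time, covering a final segment of `ℕ`), so
`B` is almost contained in it. Then almost every element of `B` was answered `1` and the next
element of `B` lies beyond the jump, so `m ↦ nextMem B (nextMem B m)` dominates `f`.
-/

open Cardinal

/-- `B` reaps `X`: `B ⊆* X` or `B ⊆* ω ∖ X`. -/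
def Reaps (B X : Set ℕ) : Prop := (B \ X).Finite ∨ (B ∩ X).Finite

/-- Player II wins a play of the reaping game with respect to `A`:
`n` is Player I's (strictly increasing) sequence of moves, `i` Player II's moves. -/
def IIWinsReaping (A : Set (Set ℕ)) (n : ℕ → ℕ) (i : ℕ → Bool) : Prop :=
  ∃ B ∈ A, Set.range n ∩ B = {m | ∃ k, i k = true ∧ n k = m} ∧ Reaps B (Set.range n)

/-- Player I has a winning strategy in the reaping game with respect to `A`:
a strategy producing strictly increasing (legal) plays that always defeats Player II. -/
def IWinStratReaping (A : Set (Set ℕ)) : Prop :=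
  ∃ σ : List Bool → ℕ, ∀ i : ℕ → Bool,
    StrictMono (fun k => σ ((List.range k).map i)) ∧
    ¬ IIWinsReaping A (fun k => σ ((List.range k).map i)) i

/-- The reaping number 𝔯. -/
noncomputable def frakR : Cardinal :=
  sInf { c | ∃ R : Set (Set ℕ), (∀ B ∈ R, B.Infinite) ∧
    (∀ x : Set ℕ, ∃ B ∈ R, Reaps B x) ∧ #R = c }

open Filter Set

variable {A : Set (Set ℕ)}

lemma reaps_compl {B x : Set ℕ} : Reaps B xᶜ ↔ Reaps B x := by
  rw [Reaps, Reaps, sdiff_compl, ← sdiff_eq, or_comm]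

def play (σ : List Bool → ℕ) (i : ℕ → Bool) (k : ℕ) : ℕ := σ ((List.range k).map i)

lemma exists_IIWinsReaping_play (h : ¬ IWinStratReaping A) {σ : List Bool → ℕ}
    (hσ : ∀ i, StrictMono (play σ i)) : ∃ i, IIWinsReaping A (play σ i) i := by
  by_contra! hII
  exact h ⟨σ, fun i => ⟨hσ i, hII i⟩⟩

lemma exists_reaps_range (h : ¬ IWinStratReaping A) {n : ℕ → ℕ} (hn : StrictMono n) :
    ∃ B ∈ A, Reaps B (range n) := by
  have hplay : ∀ i, play (fun l => n l.length) i = n := fun i => by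
    funext k
    simp [play]
  obtain ⟨i, B, hB, -, hreaps⟩ :=
    exists_IIWinsReaping_play h (σ := fun l => n l.length) fun i => by rw [hplay]; exact hn
  exact ⟨B, hB, hplay i ▸ hreaps⟩

lemma exists_reaps (h : ¬ IWinStratReaping A) (x : Set ℕ) : ∃ B ∈ A, Reaps B x := by
  have of_infinite : ∀ y : Set ℕ, y.Infinite → ∃ B ∈ A, Reaps B y := fun y hy => by
    have := exists_reaps_range h (Nat.nth_strictMono hy)
    rwa [Nat.range_nth_of_infinite hy] at this
  rcases x.finite_or_infinite with hx | hx
  · simpa [reaps_compl] using of_infinite xᶜ hx.infinite_compl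
  · exact of_infinite x hx

lemma Ici_subset_range_of_eventually_succ {n : ℕ → ℕ} {K : ℕ}
    (hn : ∀ k ≥ K, n (k + 1) = n k + 1) : Ici (n K) ⊆ range n := by
  have hK : ∀ j, n (K + j) = n K + j := fun j => by
    induction j with
    | zero => rfl
    | succ j ih => rw [← add_assoc, hn _ (Nat.le_add_right K j), ih, add_assoc]
  intro t ht
  exact ⟨K + (t - n K), by rw [hK]; exact Nat.add_sub_of_le ht⟩

def EventuallySparse (g : ℕ → ℕ) (B : Set ℕ) : Prop :=
  ∀ᶠ b in atTop, b ∈ B → ∀ b' ∈ B, b < b' → g b ≤ b'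

def jumpStrategy (g : ℕ → ℕ) (l : List Bool) : ℕ :=
  l.foldl (fun v b => if b then g v else v + 1) 0

section jumpRule

variable {g : ℕ → ℕ} {i : ℕ → Bool}

lemma play_jumpStrategy_succ (k : ℕ) :
    play (jumpStrategy g) i (k + 1) =
      if i k then g (play (jumpStrategy g) i k) else play (jumpStrategy g) i k + 1 := by
  simp [play, jumpStrategy, List.range_succ]

lemma strictMono_play_jumpStrategy (hg : ∀ v, v < g v) : StrictMono (play (jumpStrategy g) i) :=
  strictMono_nat_of_lt_succ fun k => by
    rw [play_jumpStrategy_succ]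
    split_ifs
    exacts [hg _, Nat.lt_succ_self _]

variable {B : Set ℕ} {n : ℕ → ℕ} (hn : StrictMono n)
  (hsucc : ∀ k, n (k + 1) = if i k then g (n k) else n k + 1)
  (hwin : range n ∩ B = n '' {k | i k})
include hn hsucc hwin

lemma finite_diff_range_of_reaps (hB : B.Infinite) (hreaps : Reaps B (range n)) :
    (B \ range n).Finite := by
  refine hreaps.resolve_right fun hfin => hB ?_
  have hones : {k | i k}.Finite :=
    Finite.of_finite_image (by rw [← hwin, inter_comm]; exact hfin) hn.injective.injOn
  obtain ⟨K, hK⟩ := hones.bddAbove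
  have hsucc' : ∀ k ≥ K + 1, n (k + 1) = n k + 1 := fun k hk => by
    have : i k = false := Bool.eq_false_iff.2 fun hik => absurd (hK hik) (by omega)
    rw [hsucc, this, if_neg Bool.false_ne_true]
  refine (hfin.union (finite_Iio (n (K + 1)))).subset fun b hb => ?_
  by_cases hbK : b < n (K + 1)
  · exact Or.inr hbK
  · exact Or.inl ⟨hb, Ici_subset_range_of_eventually_succ hsucc' (not_lt.1 hbK)⟩

lemma eventuallySparse_of_finite_diff_range (hfin : (B \ range n).Finite) :
    EventuallySparse g B := by
  obtain ⟨N, hN⟩ := hfin.bddAbove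
  have mem_range : ∀ x ∈ B, N < x → x ∈ range n := fun x hx hNx => by
    by_contra hxn
    exact absurd (hN ⟨hx, hxn⟩) (not_le.2 hNx)
  filter_upwards [eventually_gt_atTop N] with b hNb hb b' hb' hbb'
  obtain ⟨k, hk : i k, rfl⟩ : b ∈ n '' {k | i k} := hwin ▸ ⟨mem_range b hb hNb, hb⟩
  obtain ⟨k', rfl⟩ := mem_range b' hb' (hNb.trans hbb')
  calc g (n k) = n (k + 1) := by rw [hsucc, if_pos hk]
    _ ≤ n k' := hn.monotone (hn.lt_iff_lt.1 hbb')

end jumpRule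

/-- Junk value `0` when `B` has no element above `m`. -/
noncomputable def nextMem (B : Set ℕ) (m : ℕ) : ℕ := sInf {b ∈ B | m < b}

section nextMem

variable {B : Set ℕ}

lemma nextMem_mem_and_lt (hB : B.Infinite) (m : ℕ) : nextMem B m ∈ B ∧ m < nextMem B m :=
  Nat.sInf_mem (hB.exists_gt m)

lemma EventuallySparse.eventually_le_nextMem_nextMem {f g : ℕ → ℕ}
    (hsparse : EventuallySparse g B) (hB : B.Infinite) (hfg : ∀ m b, m ≤ b → f m ≤ g b) :
    ∀ᶠ m in atTop, f m ≤ nextMem B (nextMem B m) := by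
  obtain ⟨N, hN⟩ := eventually_atTop.1 hsparse
  filter_upwards [eventually_ge_atTop N] with m hNm
  obtain ⟨hb, hmb⟩ := nextMem_mem_and_lt hB m
  obtain ⟨hb', hbb'⟩ := nextMem_mem_and_lt hB (nextMem B m)
  exact (hfg m _ hmb.le).trans (hN _ (hNm.trans hmb.le) hb _ hb' hbb')

end nextMem

def jumpBeyond (f : ℕ → ℕ) (v : ℕ) : ℕ := v + 1 + ∑ j ∈ Finset.range (v + 1), f j

lemma lt_jumpBeyond (f : ℕ → ℕ) (v : ℕ) : v < jumpBeyond f v := by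
  unfold jumpBeyond
  omega

lemma le_jumpBeyond (f : ℕ → ℕ) {m v : ℕ} (hmv : m ≤ v) : f m ≤ jumpBeyond f v := by
  have : f m ≤ ∑ j ∈ Finset.range (v + 1), f j :=
    Finset.single_le_sum (fun _ _ => Nat.zero_le _) (Finset.mem_range.2 (Nat.lt_succ_of_le hmv))
  unfold jumpBeyond
  omega

lemma exists_eventually_le_nextMem_nextMem (hA : ∀ B ∈ A, B.Infinite)
    (h : ¬ IWinStratReaping A) (f : ℕ → ℕ) :
    ∃ B ∈ A, ∀ᶠ m in atTop, f m ≤ nextMem B (nextMem B m) := by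
  have hg := lt_jumpBeyond f
  obtain ⟨i, B, hBA, hwin, hreaps⟩ :=
    exists_IIWinsReaping_play h fun _ => strictMono_play_jumpStrategy hg
  have hn := strictMono_play_jumpStrategy hg (i := i)
  have hfin := finite_diff_range_of_reaps hn play_jumpStrategy_succ hwin (hA B hBA) hreaps
  have hsparse := eventuallySparse_of_finite_diff_range hn play_jumpStrategy_succ hwin hfin
  exact ⟨B, hBA, hsparse.eventually_le_nextMem_nextMem (hA B hBA) fun _ _ => le_jumpBeyond f⟩

theorem stmt7 (A : Set (Set ℕ)) (hA : ∀ B ∈ A, B.Infinite)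
    (h : ¬ IWinStratReaping A) : frakR ≤ #A ∧ frakD ≤ #A := by
  refine ⟨csInf_le' ⟨A, hA, exists_reaps h, rfl⟩, ?_⟩
  calc frakD ≤ #((fun B m => nextMem B (nextMem B m)) '' A) := by
        refine csInf_le' ⟨_, fun f => ?_, rfl⟩
        obtain ⟨B, hB, hdom⟩ := exists_eventually_le_nextMem_nextMem hA h f
        exact ⟨_, mem_image_of_mem _ hB, hdom⟩
    _ ≤ #A := mk_image_le
end

section
/- If κ < cov(M), then for every family A ⊆ ω^ω of size κ, Player II has no winning strategy in the anti-localizing game with respect to A. (Hence the minimal size of a family for which Player II has a winning strategy in the anti-localizing game is at least cov(M), and combined with the converse inequality it equals cov(M).) -/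
/-!
Fix a strategy `τ` for Player II. Conditions are finite initial parts of slaloms, and a real
`x` is safe at a condition if `τ` answers every extension of it exactly as `x` demands. Two reals
safe at `p` agree beyond `p`: where they differ, a slalom entry containing one value but not the
other would force contradictory answers from `τ`. Order the conditions so that a stronger one
captures, beyond the weaker one, its safe real. For each `x ∈ A` it is dense either to make `τ`
contradict `x` or to make `x` safe; these fewer than `cov(M)` dense sets, together with countably
many making the slalom total, are met by a single play, by Martin's axiom for countable posets.
If `τ` won that play against `x ∈ A`, then `x` would be safe from some stage on, hence captured by
the slalom from then on, so `τ` would answer `1` only finitely often.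
-/

open Cardinal

/-- `φ` is a slalom: `φ(n)` is a set of `n+1` naturals. -/
def IsSlalom (φ : ℕ → Finset ℕ) : Prop := ∀ n, (φ n).card = n + 1

/-- Player II wins a play of the anti-localizing game with respect to `A`. -/
def IIWinsAntiLoc (A : Set (ℕ → ℕ)) (a : ℕ → Finset ℕ) (i : ℕ → Bool) : Prop :=
  {k | i k = true}.Infinite ∧ ∃ x ∈ A, ∀ k, (i k = true ↔ x k ∉ a k)

/-- Player II has a winning strategy in the anti-localizing game with respect to `A`. -/
def IIWinStratAntiLoc (A : Set (ℕ → ℕ)) : Prop :=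
  ∃ τ : List (Finset ℕ) → Bool, ∀ a : ℕ → Finset ℕ, IsSlalom a →
    IIWinsAntiLoc A a (fun k => τ ((List.range (k + 1)).map a))

/-- `cov(M)`: the least number of meager sets covering the Cantor space. -/
noncomputable def covMeager : Cardinal :=
  sInf { c | ∃ S : Set (Set (ℕ → Bool)),
    (∀ s ∈ S, IsMeagre s) ∧ ⋃₀ S = Set.univ ∧ #S = c }

section CantorSpace

lemma map_range_getD {α : Type*} (L : List α) (d : ℕ → α) :
    (List.range L.length).map (fun k => L.getD k (d k)) = L := by
  refine List.ext_getElem (by simp) fun k _ hk => ?_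
  simp [hk]

variable {α : Type*} [TopologicalSpace α] [DiscreteTopology α]

lemma isOpen_setOf_exists_map_range_mem (D : Set (List α)) :
    IsOpen {c : ℕ → α | ∃ n, (List.range n).map c ∈ D} := by
  refine isOpen_iff_forall_mem_open.2 fun c ⟨n, hn⟩ =>
    ⟨PiNat.cylinder c n, fun y hy => ⟨n, ?_⟩, PiNat.isOpen_cylinder _ c n,
      PiNat.self_mem_cylinder c n⟩
  rwa [List.map_congr_left fun k hk => hy k (List.mem_range.1 hk)]

lemma dense_setOf_exists_map_range_mem {D : Set (List α)} (hD : ∀ l, ∃ t, l ++ t ∈ D) :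
    Dense {c : ℕ → α | ∃ n, (List.range n).map c ∈ D} := by
  refine (PiNat.isTopologicalBasis_cylinders _).dense_iff.2 ?_
  rintro _ ⟨x, n, rfl⟩ -
  obtain ⟨t, ht⟩ := hD ((List.range n).map x)
  set L := (List.range n).map x ++ t
  refine ⟨fun k => L.getD k (x k), fun k hk => ?_, L.length, by rwa [map_range_getD]⟩
  have hk' : k < ((List.range n).map x).length := by simpa using hk
  simp [L, List.getElem?_append_left hk', List.getElem?_range hk]

lemma PiNat.isMeagre_singleton {E : ℕ → Type*} [∀ n, TopologicalSpace (E n)]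
    [∀ n, DiscreteTopology (E n)] [∀ n, Nontrivial (E n)] (c : ∀ n, E n) : IsMeagre {c} := by
  refine residual_of_dense_open isClosed_singleton.isOpen_compl
    ((PiNat.isTopologicalBasis_cylinders E).dense_iff.2 ?_)
  rintro _ ⟨y, n, rfl⟩ -
  obtain ⟨v, hv⟩ := exists_ne (c n)
  exact ⟨Function.update y n v, PiNat.update_mem_cylinder y n v,
    fun h => hv (by simpa using congrFun h n)⟩

end CantorSpace

lemma aleph0_lt_covMeager : ℵ₀ < covMeager := by
  rw [← Order.succ_le_iff, covMeager]
  refine le_csInf ⟨_, Set.range fun c => {c}, ?_, ?_, rfl⟩ ?_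
  · rintro _ ⟨c, rfl⟩
    exact PiNat.isMeagre_singleton c
  · exact Set.eq_univ_of_forall fun c => Set.mem_sUnion.2 ⟨{c}, ⟨c, rfl⟩, rfl⟩
  rintro _ ⟨S, hS, hcover, rfl⟩
  rw [Order.succ_le_iff, ← not_le, Cardinal.mk_le_aleph0_iff, Set.countable_coe_iff]
  intro hcount
  have : IsMeagre (⋃₀ S) := Set.sUnion_eq_biUnion ▸ isMeagre_biUnion hcount hS
  exact not_isMeagre_of_isOpen isOpen_univ Set.univ_nonempty (hcover ▸ this)

lemma nonempty_iInter_of_mk_lt_covMeager {ι : Type} (hι : #ι < covMeager)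
    {U : ι → Set (ℕ → Bool)} (hU : ∀ i, U i ∈ residual _) : (⋂ i, U i).Nonempty := by
  by_contra hempty
  have hcover : ⋃₀ Set.range (fun i => (U i)ᶜ) = Set.univ := by
    rw [Set.sUnion_range, ← Set.compl_iInter, Set.not_nonempty_iff_eq_empty.1 hempty,
      Set.compl_empty]
  have hle : covMeager ≤ #(Set.range fun i => (U i)ᶜ) :=
    csInf_le' ⟨_, by rintro _ ⟨i, rfl⟩; simpa [IsMeagre] using hU i, hcover, rfl⟩
  exact (hle.trans_lt (mk_range_le.trans_lt hι)).false

lemma exists_forall_exists_map_range_mem {ι : Type} (hι : #ι < covMeager)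
    {D : ι → Set (List Bool)} (hD : ∀ i l, ∃ t, l ++ t ∈ D i) :
    ∃ c : ℕ → Bool, ∀ i, ∃ n, (List.range n).map c ∈ D i := by
  simpa using nonempty_iInter_of_mk_lt_covMeager hι fun i =>
    residual_of_dense_open (isOpen_setOf_exists_map_range_mem (D i))
      (dense_setOf_exists_map_range_mem (hD i))

section CountableForcing

variable {P : Type*} [Preorder P] (e : ℕ → P)

open Classical in
/-- Reading a binary string: a block of `true`s counts up an index `j`, and a `false` moves to
`e j` if it lies below the current condition. -/
noncomputable def decodeStep (s : P × ℕ) : Bool → P × ℕ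
  | true => (s.1, s.2 + 1)
  | false => (if e s.2 ≤ s.1 then e s.2 else s.1, 0)

noncomputable def decode (l : List Bool) : P × ℕ := l.foldl (decodeStep e) (e 0, 0)

lemma decode_append (l t : List Bool) :
    decode e (l ++ t) = t.foldl (decodeStep e) (decode e l) :=
  List.foldl_append

lemma decodeStep_fst_le (s : P × ℕ) (b : Bool) : (decodeStep e s b).1 ≤ s.1 := by
  cases b
  · by_cases h : e s.2 ≤ s.1 <;> simp [decodeStep, h]
  · exact le_rfl

lemma antitone_decode_map_range (c : ℕ → Bool) :
    Antitone fun n => (decode e ((List.range n).map c)).1 :=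
  antitone_nat_of_succ_le fun n => by
    simpa [List.range_succ, decode_append] using decodeStep_fst_le e _ (c n)

lemma foldl_decodeStep_replicate_true (s : P × ℕ) (j : ℕ) :
    (List.replicate j true).foldl (decodeStep e) s = (s.1, s.2 + j) := by
  induction j generalizing s with
  | zero => rfl
  | succ j ih => rw [List.replicate_succ', List.foldl_append, ih]; rfl

lemma exists_decode_append_mem (he : Function.Surjective e) {D : Set P}
    (hD : ∀ p, ∃ q ≤ p, q ∈ D) (l : List Bool) : ∃ t, (decode e (l ++ t)).1 ∈ D := by
  obtain ⟨q, hqs, hqD⟩ := hD (decode e (l ++ [false])).1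
  obtain ⟨j, rfl⟩ := he q
  have hs : (decode e (l ++ [false])).2 = 0 := by simp [decode_append, decodeStep]
  refine ⟨false :: (List.replicate j true ++ [false]), ?_⟩
  rw [← List.singleton_append, ← List.append_assoc, decode_append, List.foldl_append,
    foldl_decodeStep_replicate_true, hs, zero_add]
  simpa [decodeStep, if_pos hqs] using hqD

/-- Martin's axiom for countable posets below `cov(M)`. -/
theorem exists_antitone_forall_exists_mem [Countable P] [Nonempty P] {ι : Type}
    (hι : #ι < covMeager) {D : ι → Set P} (hD : ∀ i p, ∃ q ≤ p, q ∈ D i) :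
    ∃ f : ℕ → P, Antitone f ∧ ∀ i, ∃ n, f n ∈ D i := by
  obtain ⟨e, he⟩ := exists_surjective_nat P
  obtain ⟨c, hc⟩ := exists_forall_exists_map_range_mem hι
    (D := fun i => {l | (decode e l).1 ∈ D i}) fun i => exists_decode_append_mem e he (hD i)
  exact ⟨_, antitone_decode_map_range e c, hc⟩

end CountableForcing

lemma List.IsPrefix.take_eq_take {α : Type*} {l₁ l₂ : List α} (h : l₁ <+: l₂) {n : ℕ}
    (hn : n ≤ l₁.length) : l₂.take n = l₁.take n := by
  obtain ⟨t, rfl⟩ := h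
  exact List.take_append_of_le_length hn

lemma exists_forall_eq_map_range_of_prefix {α : Type*} {l : ℕ → List α}
    (hl : ∀ n m, n ≤ m → l n <+: l m) (hlen : ∀ k, ∃ n, k < (l n).length) :
    ∃ a : ℕ → α, ∀ n, l n = (List.range (l n).length).map a := by
  choose N hN using hlen
  refine ⟨fun k => (l (N k))[k]'(hN k), fun n => List.ext_getElem (by simp) fun k hk _ => ?_⟩
  simp only [List.getElem_map, List.getElem_range]
  rcases le_total n (N k) with h | h
  · exact (hl _ _ h).getElem hk
  · exact ((hl _ _ h).getElem (hN k)).symm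

namespace AntiLoc

/-- The index `τ` only selects the order on conditions. -/
@[ext]
structure Cond (τ : List (Finset ℕ) → Bool) where
  list : List (Finset ℕ)
  card_getElem : ∀ k (hk : k < list.length), list[k].card = k + 1

variable (τ : List (Finset ℕ) → Bool)

instance : Countable (Cond τ) := Function.Injective.countable fun _ _ => Cond.ext

instance : Nonempty (Cond τ) := ⟨⟨[], fun _ hk => absurd hk (Nat.not_lt_zero _)⟩⟩

def Agrees (x : ℕ → ℕ) (l : List (Finset ℕ)) : Prop :=
  ∀ k (hk : k < l.length), (τ (l.take (k + 1)) = true ↔ x k ∉ l[k])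

def Safe (x : ℕ → ℕ) (p : Cond τ) : Prop :=
  ∀ q : Cond τ, p.list <+: q.list → Agrees τ x q.list

variable {τ}

lemma Safe.mono {x : ℕ → ℕ} {p q : Cond τ} (h : Safe τ x p) (hpq : p.list <+: q.list) :
    Safe τ x q :=
  fun r hr => h r (hpq.trans hr)

lemma Agrees.mem_iff {x y : ℕ → ℕ} {l : List (Finset ℕ)} (hx : Agrees τ x l)
    (hy : Agrees τ y l) {k : ℕ} (hk : k < l.length) : x k ∈ l[k] ↔ y k ∈ l[k] :=
  not_iff_not.1 ((hx k hk).symm.trans (hy k hk))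

instance : Preorder (Cond τ) where
  le q p := p.list <+: q.list ∧ ∀ x, Safe τ x p →
    ∀ k (hk : k < q.list.length), p.list.length ≤ k → x k ∈ q.list[k]
  le_refl p := ⟨List.prefix_refl _, fun _ _ _ hk hpk => absurd hk (not_lt.2 hpk)⟩
  le_trans r q p hrq hqp := ⟨hqp.1.trans hrq.1, fun x hx k hk hpk => by
    rcases lt_or_ge k q.list.length with hkq | hqk
    · rw [← hrq.1.getElem hkq]
      exact hqp.2 x hx k hkq hpk
    · exact hrq.2 x (hx.mono hqp.1) k hk hqk⟩

def separating (v w : ℕ → ℕ) (k : ℕ) : Finset ℕ :=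
  insert (v k) (Finset.Ico (v k + w k + 1) (v k + w k + 1 + k))

lemma isSlalom_separating (v w : ℕ → ℕ) : IsSlalom (separating v w) := fun k => by
  rw [separating, Finset.card_insert_of_notMem (by simp), Nat.card_Ico]
  omega

lemma mem_separating (v w : ℕ → ℕ) (k : ℕ) : v k ∈ separating v w k :=
  Finset.mem_insert_self _ _

lemma notMem_separating {v w : ℕ → ℕ} {k : ℕ} (h : w k ≠ v k) :
    w k ∉ separating v w k := by
  simp only [separating, Finset.mem_insert, Finset.mem_Ico, h, false_or]
  omega

def Cond.extend (p : Cond τ) (S : ℕ → Finset ℕ) (hS : IsSlalom S) (m : ℕ) : Cond τ where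
  list := p.list ++ (List.range' p.list.length (m - p.list.length)).map S
  card_getElem k hk := by
    rcases lt_or_ge k p.list.length with h | h
    · rw [List.getElem_append_left h]
      exact p.card_getElem k h
    · rw [List.getElem_append_right h, List.getElem_map, List.getElem_range', one_mul,
        Nat.add_sub_cancel' h]
      exact hS k

section Extend

variable (p : Cond τ) {S : ℕ → Finset ℕ} (hS : IsSlalom S) {m : ℕ}

lemma Cond.prefix_extend : p.list <+: (p.extend S hS m).list :=
  List.prefix_append _ _

lemma Cond.length_extend (hm : p.list.length ≤ m) : (p.extend S hS m).list.length = m := by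
  simp [Cond.extend]
  omega

lemma Cond.getElem_extend {k : ℕ} (hk : k < (p.extend S hS m).list.length)
    (hpk : p.list.length ≤ k) : (p.extend S hS m).list[k] = S k := by
  simp only [Cond.extend, List.getElem_append_right hpk, List.getElem_map, List.getElem_range',
    one_mul, Nat.add_sub_cancel' hpk]

end Extend

lemma Safe.not_agrees_extend_separating {x y : ℕ → ℕ} {p : Cond τ} (hx : Safe τ x p) {k : ℕ}
    (hk : p.list.length ≤ k) (hne : y k ≠ x k) :
    ¬ Agrees τ y (p.extend (separating x y) (isSlalom_separating x y) (k + 1)).list := by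
  intro hy
  have hkq : k < (p.extend _ (isSlalom_separating x y) (k + 1)).list.length := by
    rw [p.length_extend _ (by omega)]
    omega
  have hmem := (hx _ (p.prefix_extend _)).mem_iff hy hkq
  rw [p.getElem_extend _ hkq hk] at hmem
  exact notMem_separating hne (hmem.1 (mem_separating x y k))

lemma Safe.eq {x y : ℕ → ℕ} {p : Cond τ} (hx : Safe τ x p) (hy : Safe τ y p) {k : ℕ}
    (hk : p.list.length ≤ k) : x k = y k :=
  by_contra fun hne =>
    hx.not_agrees_extend_separating hk (Ne.symm hne) (hy _ (p.prefix_extend _))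

lemma Cond.le_of_prefix_of_forall_not_safe {p q : Cond τ} (hpq : p.list <+: q.list)
    (h : ∀ x, ¬ Safe τ x p) : q ≤ p :=
  ⟨hpq, fun x hx => (h x hx).elim⟩

lemma Cond.extend_le {p : Cond τ} {z : ℕ → ℕ} (hz : Safe τ z p) {S : ℕ → Finset ℕ}
    (hS : IsSlalom S) (hzS : ∀ k, z k ∈ S k) (m : ℕ) : p.extend S hS m ≤ p :=
  ⟨p.prefix_extend hS, fun x hx k hk hpk => by
    rw [p.getElem_extend hS hk hpk, hx.eq hz hpk]
    exact hzS k⟩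

lemma safe_of_agrees_of_eq {x z : ℕ → ℕ} {p : Cond τ} (hz : Safe τ z p)
    (hx : Agrees τ x p.list) (hxz : ∀ k, p.list.length ≤ k → x k = z k) : Safe τ x p := by
  intro q hpq k hk
  rcases lt_or_ge k p.list.length with h | h
  · rw [← hpq.getElem h, hpq.take_eq_take (by omega)]
    exact hx k h
  · rw [hxz k h]
    exact hz q hpq k hk

lemma exists_le_lt_length (p : Cond τ) (m : ℕ) : ∃ q ≤ p, m < q.list.length := by
  have hlen (z : ℕ → ℕ) :=
    p.length_extend (isSlalom_separating z z) (m := m + 1 + p.list.length) (by omega)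
  by_cases h : ∃ z, Safe τ z p
  · obtain ⟨z, hz⟩ := h
    exact ⟨_, Cond.extend_le hz _ (mem_separating z z) _, by rw [hlen]; omega⟩
  · exact ⟨_, Cond.le_of_prefix_of_forall_not_safe (p.prefix_extend (isSlalom_separating 0 0))
      (not_exists.1 h), by rw [hlen]; omega⟩

lemma exists_le_not_agrees_or_safe (x : ℕ → ℕ) (p : Cond τ) :
    ∃ q ≤ p, ¬ Agrees τ x q.list ∨ Safe τ x q := by
  by_cases hx : Safe τ x p
  · exact ⟨p, le_rfl, .inr hx⟩
  by_cases hxp : Agrees τ x p.list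
  swap
  · exact ⟨p, le_rfl, .inl hxp⟩
  by_cases h : ∃ z, Safe τ z p
  · obtain ⟨z, hz⟩ := h
    obtain ⟨k, hk, hne⟩ : ∃ k, p.list.length ≤ k ∧ x k ≠ z k := by
      by_contra! h
      exact hx (safe_of_agrees_of_eq hz hxp h)
    exact ⟨_, Cond.extend_le hz _ (mem_separating z x) (k + 1),
      .inl (hz.not_agrees_extend_separating hk hne)⟩
  · obtain ⟨q, hpq, hq⟩ : ∃ q : Cond τ, p.list <+: q.list ∧ ¬ Agrees τ x q.list := by
      simpa [Safe] using hx
    exact ⟨q, Cond.le_of_prefix_of_forall_not_safe hpq (not_exists.1 h), .inl hq⟩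

lemma agrees_map_range {x : ℕ → ℕ} {a : ℕ → Finset ℕ}
    (h : ∀ k, τ ((List.range (k + 1)).map a) = true ↔ x k ∉ a k) (n : ℕ) :
    Agrees τ x ((List.range n).map a) := fun k hk => by
  rw [← List.map_take, List.take_range, min_eq_left (by simpa using hk), List.getElem_map,
    List.getElem_range]
  exact h k

theorem not_iiWinStratAntiLoc_of_mk_lt_covMeager {A : Set (ℕ → ℕ)} (hA : #A < covMeager) :
    ¬ IIWinStratAntiLoc A := by
  rintro ⟨τ, hτ⟩
  have hι : #(A ⊕ ℕ) < covMeager := by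
    simpa using add_lt_of_lt aleph0_lt_covMeager.le hA aleph0_lt_covMeager
  obtain ⟨f, hf, hmeet⟩ := exists_antitone_forall_exists_mem hι
    (D := Sum.elim (fun x => {q : Cond τ | ¬ Agrees τ x q.list ∨ Safe τ x q})
      fun m => {q | m < q.list.length})
    (by rintro (x | m) p; exacts [exists_le_not_agrees_or_safe x p, exists_le_lt_length p m])
  have hlen (k : ℕ) : ∃ n, k < (f n).list.length := hmeet (.inr k)
  obtain ⟨a, ha⟩ := exists_forall_eq_map_range_of_prefix (fun n m h => (hf h).1) hlen
  have hgetElem {n k : ℕ} (hk : k < (f n).list.length) : (f n).list[k] = a k := by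
    simp [List.getElem_of_eq (ha n) hk]
  have hslalom : IsSlalom a := fun k => by
    obtain ⟨n, hk⟩ := hlen k
    rw [← hgetElem hk, (f n).card_getElem k hk]
  obtain ⟨hinf, x, hxA, hx⟩ := hτ a hslalom
  obtain ⟨n₀, hn₀ | hn₀⟩ := hmeet (.inl ⟨x, hxA⟩)
  · exact hn₀ (ha n₀ ▸ agrees_map_range hx _)
  -- `x` is safe at `f n₀`, so the slalom captures `x` beyond `f n₀` and `τ` answers `0` there.
  refine hinf ((Set.finite_Iio (f n₀).list.length).subset fun k hk =>
    Set.mem_Iio.2 (not_le.1 fun hle => ?_))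
  obtain ⟨n, hkn⟩ := hlen k
  have hkm : k < (f (max n n₀)).list.length := hkn.trans_le (hf (le_max_left n n₀)).1.length_le
  have hmem := (hf (le_max_right n n₀)).2 x hn₀ k hkm hle
  exact (hx k).1 hk (hgetElem hkm ▸ hmem)

lemma iiWinStratAntiLoc_univ : IIWinStratAntiLoc Set.univ :=
  ⟨fun _ => true, fun a _ => ⟨by simpa using Set.infinite_univ, fun k => (a k).sup id + 1,
    trivial, fun k => iff_of_true rfl fun h =>
      (Finset.le_sup (f := id) h).not_gt (Nat.lt_succ_self _)⟩⟩

end AntiLoc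

theorem stmt11 :
    (∀ κ : Cardinal, κ < covMeager →
      ∀ A : Set (ℕ → ℕ), #A = κ → ¬ IIWinStratAntiLoc A) ∧
    covMeager ≤ sInf { c | ∃ A : Set (ℕ → ℕ), IIWinStratAntiLoc A ∧ #A = c } := by
  refine ⟨fun κ hκ A hA => AntiLoc.not_iiWinStratAntiLoc_of_mk_lt_covMeager (hA ▸ hκ), ?_⟩
  refine le_csInf ⟨_, Set.univ, AntiLoc.iiWinStratAntiLoc_univ, rfl⟩ ?_
  rintro _ ⟨A, hA, rfl⟩
  exact not_lt.1 fun h => AntiLoc.not_iiWinStratAntiLoc_of_mk_lt_covMeager h hA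
end

section
/- If Player II has a winning strategy in the anti-localizing* game with respect to a family A ⊆ ω^ω, then |A| = 𝔠. -/
/-!
A strategy `τ` for II turns a slalom `a` into II's answers `F a`, where `F a k` depends only on
`a 0, …, a k`. If `τ` is winning, `F` is nowhere locally constant: past any `m`, thicken `a` into
a slalom containing `F a k` for every `k ≥ m`; II escapes it somewhere beyond `m`, so the answers
change. Splitting repeatedly along a binary tree and passing to the limit along each branch
(slaloms form a product space) yields `2^ℵ₀` slaloms with pairwise distinct images, all in `A`.
-/

open Cardinal

/-- Player II has a winning strategy in the anti-localizing* game with respect to `A`: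
Player I plays `a k ∈ [ω]^{k+1}`, Player II responds with naturals; Player II wins
if the sequence of Player II's moves is in `A` and escapes the slalom infinitely often. -/
def IIWinStratAntiLocStar (A : Set (ℕ → ℕ)) : Prop :=
  ∃ τ : List (Finset ℕ) → ℕ, ∀ a : ℕ → Finset ℕ, IsSlalom a →
    (fun k => τ ((List.range (k + 1)).map a)) ∈ A ∧
    {k | τ ((List.range (k + 1)).map a) ∉ a k}.Infinite

open PiNat

namespace Fusion

variable {α : ℕ → Type*}

theorem apply_eq_of_le {f : ℕ → ∀ j, α j} {L : ℕ → ℕ} (hL : Monotone L)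
    (hf : ∀ n, ∀ j < L n, f (n + 1) j = f n j) {n n' : ℕ} (hn : n ≤ n') {j : ℕ}
    (hj : j < L n) : f n' j = f n j := by
  induction n', hn using Nat.le_induction with
  | base => rfl
  | succ n' hn ih => rw [hf n' j (hj.trans_le (hL hn)), ih]

theorem diagonal_eq {f : ℕ → ∀ j, α j} {L : ℕ → ℕ} (hL : StrictMono L)
    (hf : ∀ n, ∀ j < L n, f (n + 1) j = f n j) {n j : ℕ} (hj : j < L n) :
    f (j + 1) j = f n j := by
  rcases le_total n (j + 1) with h | h
  · exact apply_eq_of_le hL.monotone hf h hj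
  · exact (apply_eq_of_le hL.monotone hf h (Nat.lt_succ_self j |>.trans_le hL.le_apply)).symm

variable (b : (∀ n, α n) → ℕ → ∀ n, α n) (k : (∀ n, α n) → ℕ → ℕ) (a₀ : ∀ n, α n)

/-- Stage `n` along the branch `x` is a point with a level below which later stages agree with
it; the bit `x n` decides whether to keep the point or to replace it by its split `b`. -/
def stage (x : ℕ → Bool) : ℕ → (∀ n, α n) × ℕ
  | 0 => (a₀, 0)
  | n + 1 => (if x n then b (stage x n).1 (stage x n).2 else (stage x n).1,
      k (stage x n).1 (stage x n).2 + 1)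

def limit (x : ℕ → Bool) (j : ℕ) : α j := (stage b k a₀ x (j + 1)).1 j

variable {b k a₀}

theorem stage_congr {x y : ℕ → Bool} {n : ℕ} (h : ∀ i < n, x i = y i) :
    stage b k a₀ x n = stage b k a₀ y n := by
  induction n with
  | zero => rfl
  | succ n ih =>
    simp only [stage, ih fun i hi => h i (hi.trans n.lt_succ_self), h n n.lt_succ_self]

theorem limit_eq (hb : ∀ a m, b a m ∈ cylinder a m) (hk : ∀ a m, m ≤ k a m)
    (x : ℕ → Bool) {n j : ℕ} (hj : j < (stage b k a₀ x n).2) :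
    limit b k a₀ x j = (stage b k a₀ x n).1 j := by
  refine diagonal_eq (f := fun n => (stage b k a₀ x n).1) (L := fun n => (stage b k a₀ x n).2)
    (strictMono_nat_of_lt_succ fun n => Nat.lt_succ_of_le (hk _ _)) (fun n j hj => ?_) hj
  simp only [stage]
  split_ifs
  · exact hb _ _ j hj
  · rfl

theorem apply_limit_ne {β : Type*} {F : (∀ n, α n) → ℕ → β}
    (hF : ∀ a a' j, a' ∈ cylinder a (j + 1) → F a' j = F a j)
    (hb : ∀ a m, b a m ∈ cylinder a m) (hk : ∀ a m, m ≤ k a m)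
    (hne : ∀ a m, F (b a m) (k a m) ≠ F a (k a m)) {x y : ℕ → Bool} {n : ℕ}
    (hxy : ∀ i < n, x i = y i) (hx : x n = true) (hy : y n = false) :
    F (limit b k a₀ x) ≠ F (limit b k a₀ y) := by
  set s := stage b k a₀ x n
  have hsx : stage b k a₀ x (n + 1) = (b s.1 s.2, k s.1 s.2 + 1) := by simp [stage, s, hx]
  have hsy : stage b k a₀ y (n + 1) = (s.1, k s.1 s.2 + 1) := by
    simp [stage, s, hy, stage_congr hxy]
  have hX : F (limit b k a₀ x) (k s.1 s.2) = F (b s.1 s.2) (k s.1 s.2) :=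
    hF _ _ _ fun i hi => by rw [limit_eq hb hk x (n := n + 1) (by rw [hsx]; exact hi), hsx]
  have hY : F (limit b k a₀ y) (k s.1 s.2) = F s.1 (k s.1 s.2) :=
    hF _ _ _ fun i hi => by rw [limit_eq hb hk y (n := n + 1) (by rw [hsy]; exact hi), hsy]
  exact fun h => hne s.1 s.2 (hX.symm.trans ((congrFun h _).trans hY))

theorem injective_comp_limit {β : Type*} {F : (∀ n, α n) → ℕ → β}
    (hF : ∀ a a' j, a' ∈ cylinder a (j + 1) → F a' j = F a j)
    (hb : ∀ a m, b a m ∈ cylinder a m) (hk : ∀ a m, m ≤ k a m)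
    (hne : ∀ a m, F (b a m) (k a m) ≠ F a (k a m)) :
    Function.Injective (F ∘ limit b k a₀) := by
  intro x y hxy
  by_contra hxy'
  have hagree : ∀ i < firstDiff x y, x i = y i := fun i => apply_eq_of_lt_firstDiff
  have hdiff := apply_firstDiff_ne hxy'
  cases hx : x (firstDiff x y) <;> cases hy : y (firstDiff x y) <;> rw [hx, hy] at hdiff
  · exact hdiff rfl
  · exact apply_limit_ne hF hb hk hne (fun i hi => (hagree i hi).symm) hy hx hxy.symm
  · exact apply_limit_ne hF hb hk hne hagree hx hy hxy
  · exact hdiff rfl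

end Fusion

theorem continuum_le_mk_range {α : ℕ → Type*} {β : Type*} [∀ n, Nonempty (α n)]
    (F : (∀ n, α n) → ℕ → β) (hF : ∀ a a' j, a' ∈ cylinder a (j + 1) → F a' j = F a j)
    (hsplit : ∀ a m, ∃ a' ∈ cylinder a m, F a' ≠ F a) : 𝔠 ≤ #(Set.range F) := by
  have hsplit' : ∀ a m, ∃ a' j, a' ∈ cylinder a m ∧ m ≤ j ∧ F a' j ≠ F a j := by
    intro a m
    obtain ⟨a', ha', hne⟩ := hsplit a m
    obtain ⟨j, hj⟩ := Function.ne_iff.mp hne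
    exact ⟨a', j, ha', not_lt.mp fun hjm => hj (hF _ _ _ (cylinder_anti a hjm ha')), hj⟩
  choose b k hb hk hne using hsplit'
  let a₀ : ∀ n, α n := fun _ => Classical.arbitrary _
  have hinj := Set.injective_codRestrict (fun x => Set.mem_range_self (Fusion.limit b k a₀ x)) |>.mpr
    (Fusion.injective_comp_limit hF hb hk hne)
  refine le_of_eq_of_le ?_ ((lift_mk_le_lift_mk_of_injective hinj).trans_eq (lift_uzero _))
  simp

namespace AntiLocalizing

/-- Slaloms as a product space, so that limits of slaloms along a tree are slaloms. -/
abbrev Slalom : Type := ∀ n : ℕ, {s : Finset ℕ // s.card = n + 1}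

instance (n : ℕ) : Nonempty {s : Finset ℕ // s.card = n + 1} :=
  ⟨⟨Finset.range (n + 1), Finset.card_range _⟩⟩

variable (τ : List (Finset ℕ) → ℕ)

def move (a : Slalom) (k : ℕ) : ℕ := τ ((List.range (k + 1)).map fun i => (a i).1)

theorem move_congr {a a' : Slalom} {k : ℕ} (h : a' ∈ cylinder a (k + 1)) :
    move τ a' k = move τ a k :=
  congrArg τ <| List.map_congr_left fun i hi => congrArg Subtype.val (h i (List.mem_range.mp hi))

def pad (a : Slalom) (m : ℕ) (f : ℕ → ℕ) : Slalom := fun n =>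
  if n < m then a n else ⟨Finset.Icc (f n) (f n + n), by simp only [Nat.card_Icc]; omega⟩

theorem pad_mem_cylinder (a : Slalom) (m : ℕ) (f : ℕ → ℕ) : pad a m f ∈ cylinder a m :=
  fun _ hi => if_pos hi

theorem mem_pad (a : Slalom) {m n : ℕ} (f : ℕ → ℕ) (hn : m ≤ n) : f n ∈ (pad a m f n).1 := by
  simp [pad, not_lt.mpr hn]

/-- II has to escape the padded slalom beyond `m`, where it contains II's answers to `a`. -/
theorem exists_move_ne (hwin : ∀ a : Slalom, {k | move τ a k ∉ (a k).1}.Infinite)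
    (a : Slalom) (m : ℕ) : ∃ a' ∈ cylinder a m, move τ a' ≠ move τ a := by
  obtain ⟨k, hk, hmk⟩ := (hwin (pad a m (move τ a))).exists_gt m
  refine ⟨pad a m (move τ a), pad_mem_cylinder a m _, fun h => hk ?_⟩
  rw [h]
  exact mem_pad a (move τ a) hmk.le

end AntiLocalizing

theorem stmt12 (A : Set (ℕ → ℕ)) (h : IIWinStratAntiLocStar A) :
    #A = Cardinal.continuum := by
  obtain ⟨τ, hτ⟩ := h
  have hwin (a : AntiLocalizing.Slalom) :
      AntiLocalizing.move τ a ∈ A ∧ {k | AntiLocalizing.move τ a k ∉ (a k).1}.Infinite :=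
    hτ _ fun n => (a n).2
  refine le_antisymm ((mk_set_le A).trans_eq (by simp)) ?_
  calc 𝔠 ≤ #(Set.range (AntiLocalizing.move τ)) :=
        continuum_le_mk_range _ (fun _ _ _ => AntiLocalizing.move_congr τ)
          (AntiLocalizing.exists_move_ne τ fun a => (hwin a).2)
    _ ≤ #A := mk_le_mk_of_subset (Set.range_subset_iff.mpr fun a => (hwin a).1)
end

section
/- Player II has a winning strategy in the tallness game with respect to the ideal ED_fin: respond 1 exactly when the first coordinate of Player I's move has not appeared before. -/
open Cardinal

/-- The triangle `Δ = {(m,n) : n ≤ m}`. -/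
def Triangle : Set (ℕ × ℕ) := {p | p.2 ≤ p.1}

/-- Membership in the ideal `ED_fin` on `Δ`: a subset of `Δ` covered by finitely many
vertical lines and graphs of functions. -/
def MemEDfin (X : Set Triangle) : Prop :=
  ∃ (F : Finset ℕ) (G : Finset (ℕ → ℕ)), ∀ p ∈ X,
    (p : ℕ × ℕ).1 ∈ F ∨ ∃ g ∈ G, (p : ℕ × ℕ).2 = g (p : ℕ × ℕ).1

/-- Player II wins a play of the tallness game with respect to (the membership
predicate of) an ideal `I` on `ω`: the selected set `{n k : i k = 1}` is an
infinite member of `I`. -/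
def TallIIWins (I : Set (Set ℕ)) (n : ℕ → ℕ) (i : ℕ → Bool) : Prop :=
  {m | ∃ k, i k = true ∧ n k = m}.Infinite ∧ {m | ∃ k, i k = true ∧ n k = m} ∈ I

/-- Player II has a winning strategy in the tallness game with respect to `I`. -/
def TallIIWinStrat (I : Set (Set ℕ)) : Prop :=
  ∃ τ : List ℕ → Bool, ∀ n : ℕ → ℕ, StrictMono n →
    TallIIWins I n (fun k => τ ((List.range (k + 1)).map n))

/-- Player II has a winning strategy in the tallness game with respect to `ED_fin`,
copied to `ω` via any bijection with `Δ`. -/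
theorem stmt13 (e : ℕ ≃ Triangle) :
    TallIIWinStrat {X : Set ℕ | MemEDfin ((fun m => e m) '' X)} := by
  classical
  refine ⟨fun l => match l.reverse with
    | [] => false
    | a :: rest => decide (∀ b ∈ rest, ((e b) : ℕ × ℕ).1 ≠ ((e a) : ℕ × ℕ).1),
    fun n hn => ?_⟩
  set c : ℕ → Prop := fun k => ∀ j < k, ((e (n j)) : ℕ × ℕ).1 ≠ ((e (n k)) : ℕ × ℕ).1
    with hc
  have hrev : ∀ k, ((List.range (k + 1)).map n).reverse
      = n k :: ((List.range k).map n).reverse := by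
    intro k
    rw [List.range_succ, List.map_append, List.reverse_append]
    simp
  have hi : ∀ k, ((fun l : List ℕ => match l.reverse with
      | [] => false
      | a :: rest => decide (∀ b ∈ rest, ((e b) : ℕ × ℕ).1 ≠ ((e a) : ℕ × ℕ).1))
        ((List.range (k + 1)).map n) = true) ↔ c k := by
    intro k
    simp only [hrev k]
    rw [decide_eq_true_iff]
    constructor
    · intro h j hj
      exact h (n j) (by simp [List.mem_reverse]; exact ⟨j, hj, rfl⟩)
    · intro h b hb
      rw [List.mem_reverse, List.mem_map] at hb
      obtain ⟨j, hj, rfl⟩ := hb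
      exact h j (List.mem_range.mp hj)
  have hset : {m | ∃ k, (fun l : List ℕ => match l.reverse with
      | [] => false
      | a :: rest => decide (∀ b ∈ rest, ((e b) : ℕ × ℕ).1 ≠ ((e a) : ℕ × ℕ).1))
        ((List.range (k + 1)).map n) = true ∧ n k = m}
      = {m | ∃ k, c k ∧ n k = m} := by
    ext m; simp only [Set.mem_setOf_eq]
    exact exists_congr fun k => and_congr_left' (hi k)
  -- uniqueness of first coordinates among condition-satisfying indices
  have huniq : ∀ k k', c k → c k' →
      ((e (n k)) : ℕ × ℕ).1 = ((e (n k')) : ℕ × ℕ).1 → k = k' := by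
    intro k k' hk hk' heq
    rcases lt_trichotomy k k' with h | h | h
    · exact absurd heq (hk' k h)
    · exact h
    · exact absurd heq.symm (hk k' h)
  -- the set of first coordinates is infinite
  have hA : (Set.range fun k => ((e (n k)) : ℕ × ℕ).1).Infinite := by
    intro hfin
    obtain ⟨M, hM⟩ := hfin.bddAbove
    have hsub : (Set.range fun k => e (n k)) ⊆
        Subtype.val ⁻¹' (Set.Iic M ×ˢ Set.Iic M) := by
      rintro p ⟨k, rfl⟩
      have h1 : ((e (n k)) : ℕ × ℕ).1 ≤ M := hM ⟨k, rfl⟩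
      have h2 : ((e (n k)) : ℕ × ℕ).2 ≤ ((e (n k)) : ℕ × ℕ).1 := (e (n k)).2
      exact ⟨h1, h2.trans h1⟩
    have hfin2 : (Set.range fun k => e (n k)).Finite :=
      Set.Finite.subset (Set.Finite.preimage
        (Set.injOn_of_injective Subtype.val_injective)
        ((Set.finite_Iic M).prod (Set.finite_Iic M))) hsub
    have : (Set.range fun k => e (n k)).Infinite :=
      Set.infinite_range_of_injective (e.injective.comp hn.injective)
    exact this hfin2
  rw [hc] at *
  constructor
  · -- infinite
    rw [hset]
    intro hSfin
    apply hA
    have : (Set.range fun k => ((e (n k)) : ℕ × ℕ).1)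
        ⊆ (fun m => ((e m) : ℕ × ℕ).1) '' {m | ∃ k, c k ∧ n k = m} := by
      rintro x ⟨k, rfl⟩
      have hex : ∃ j, ((e (n j)) : ℕ × ℕ).1 = ((e (n k)) : ℕ × ℕ).1 := ⟨k, rfl⟩
      set k0 := Nat.find hex with hk0
      have hk0spec : ((e (n k0)) : ℕ × ℕ).1 = ((e (n k)) : ℕ × ℕ).1 := Nat.find_spec hex
      refine ⟨n k0, ⟨k0, ?_, rfl⟩, hk0spec⟩
      intro j hj heq
      exact Nat.find_min hex hj (heq.trans hk0spec)
    exact Set.Finite.subset (hSfin.image _) this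
  · -- membership in the ideal
    rw [hset]
    set g : ℕ → ℕ := fun x =>
      if h : ∃ k, c k ∧ ((e (n k)) : ℕ × ℕ).1 = x
      then ((e (n h.choose)) : ℕ × ℕ).2 else 0 with hg
    refine ⟨∅, {g}, ?_⟩
    rintro p ⟨m, ⟨k, hck, rfl⟩, rfl⟩
    right
    refine ⟨g, Finset.mem_singleton_self g, ?_⟩
    have hx : ∃ k', c k' ∧ ((e (n k')) : ℕ × ℕ).1 = ((e (n k)) : ℕ × ℕ).1 :=
      ⟨k, hck, rfl⟩
    have := hx.choose_spec
    have hkk : hx.choose = k := huniq _ _ this.1 hck this.2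
    simp only [hg]
    rw [dif_pos hx, hkk]
end

section
/- Let I and J be ideals on ω with J ≤_KB I (Katětov–Blass below). If Player II has a winning strategy in the tallness game with respect to J, then Player II has a winning strategy in the tallness game with respect to I. -/
open Cardinal

/-- `I` is an ideal on `ω` (containing all finite sets, proper). -/
def IsIdealOmega (I : Set (Set ℕ)) : Prop :=
  (∀ A ∈ I, ∀ B ⊆ A, B ∈ I) ∧ (∀ A ∈ I, ∀ B ∈ I, A ∪ B ∈ I) ∧
  (∀ A : Set ℕ, A.Finite → A ∈ I) ∧ Set.univ ∉ I

/-- `J ≤_KB I`: there is a finite-to-one `f : ℕ → ℕ` with `f ⁻¹' A ∈ I` for all `A ∈ J`. -/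
def KBBelow (J I : Set (Set ℕ)) : Prop :=
  ∃ f : ℕ → ℕ, (∀ m, (f ⁻¹' {m}).Finite) ∧ ∀ A ∈ J, f ⁻¹' A ∈ I

/-!
Fix a finite-to-one `f` witnessing `J ≤_KB I` and let Player I play `n₀ < n₁ < ⋯` in the
`I`-game. Call move `k` a record when `f nₖ` exceeds every earlier `f nᵢ`. Since `f` is
finite-to-one, there are infinitely many records, and their `f`-values form a strictly
increasing sequence, i.e. a legal play of the `J`-game. Player II answers `0` off the records
and, at a record, what the winning `J`-strategy answers to the record values so far. The set
`S` Player II accepts then satisfies `f '' S = T` for the winning set `T ∈ J` of the simulated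
play, so `S ⊆ f ⁻¹' T ∈ I`, and `S` is infinite because `T` is.
-/

open Filter

/-- The strict prefix maxima of a list, in order. -/
def recordList (L : List ℕ) : List ℕ :=
  L.foldl (fun acc a => if ∀ b ∈ acc, b < a then acc ++ [a] else acc) []

theorem recordList_concat' (L : List ℕ) (a : ℕ) :
    recordList (L ++ [a]) =
      if ∀ b ∈ recordList L, b < a then recordList L ++ [a] else recordList L := by
  rw [recordList, List.foldl_append]
  rfl

theorem forall_mem_recordList_lt_iff (L : List ℕ) (a : ℕ) :
    (∀ b ∈ recordList L, b < a) ↔ ∀ b ∈ L, b < a := by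
  induction L using List.reverseRecOn generalizing a with
  | nil => simp [recordList]
  | append_singleton L c ih =>
    rw [recordList_concat']
    split_ifs with hc
    · simp only [List.forall_mem_append, List.forall_mem_singleton, ih]
    · obtain ⟨b, hb, hcb⟩ : ∃ b ∈ L, c ≤ b := by simpa [ih] using hc
      simp only [List.forall_mem_append, List.forall_mem_singleton, ih]
      exact ⟨fun h => ⟨h, hcb.trans_lt (h b hb)⟩, And.left⟩

theorem recordList_concat (L : List ℕ) (a : ℕ) :
    recordList (L ++ [a]) = if ∀ b ∈ L, b < a then recordList L ++ [a] else recordList L := by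
  simp only [recordList_concat', forall_mem_recordList_lt_iff]

def IsRecord (g : ℕ → ℕ) (k : ℕ) : Prop := ∀ i < k, g i < g k

instance (g : ℕ → ℕ) : DecidablePred (IsRecord g) :=
  fun k => inferInstanceAs (Decidable (∀ i < k, g i < g k))

theorem recordList_map_range (g : ℕ → ℕ) (t : ℕ) :
    recordList ((List.range t).map g) =
      (List.range (Nat.count (IsRecord g) t)).map (g ∘ Nat.nth (IsRecord g)) := by
  induction t with
  | zero => simp [recordList]
  | succ t ih =>
    have hcond : (∀ b ∈ (List.range t).map g, b < g t) ↔ IsRecord g t := by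
      simp [IsRecord]
    rw [List.range_succ, List.map_append, List.map_singleton, recordList_concat, ih,
      Nat.count_succ]
    simp only [hcond]
    split_ifs with ht
    · rw [List.range_succ, List.map_append, List.map_singleton, Function.comp_apply,
        Nat.nth_count ht]
    · rfl

theorem infinite_isRecord_of_tendsto {g : ℕ → ℕ} (hg : Tendsto g atTop atTop) :
    (Set.ofPred (IsRecord g)).Infinite :=
  Nat.frequently_atTop_iff_infinite.1 (frequently_high_scores hg)

theorem strictMono_comp_nth_isRecord {g : ℕ → ℕ} (hR : (Set.ofPred (IsRecord g)).Infinite) :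
    StrictMono (g ∘ Nat.nth (IsRecord g)) := fun _ _ hjj' =>
  Nat.nth_mem_of_infinite hR _ _ (Nat.nth_strictMono hR hjj')

/-- `L` lists the `f`-images of Player I's moves; the last one is a new record iff `recordList`
grew. -/
def recordStrategy (τ : List ℕ → Bool) (L : List ℕ) : Bool :=
  decide (recordList L ≠ recordList L.dropLast) && τ (recordList L)

theorem recordStrategy_map_range (τ : List ℕ → Bool) (g : ℕ → ℕ) (k : ℕ) :
    recordStrategy τ ((List.range (k + 1)).map g) =
      (decide (IsRecord g k) &&
        τ ((List.range (Nat.count (IsRecord g) k + 1)).map (g ∘ Nat.nth (IsRecord g)))) := by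
  have hdrop : ((List.range (k + 1)).map g).dropLast = (List.range k).map g := by
    rw [List.range_succ, List.map_append, List.map_singleton, List.dropLast_concat]
  rw [recordStrategy, hdrop, recordList_map_range, recordList_map_range, Nat.count_succ]
  by_cases hk : IsRecord g k
  · have hgrow : ∀ c, (List.range (c + 1)).map (g ∘ Nat.nth (IsRecord g)) ≠
        (List.range c).map (g ∘ Nat.nth (IsRecord g)) := fun c h => by
      simpa using congrArg List.length h
    simp [hk, hgrow]
  · simp [hk]

theorem image_acceptedMoves_eq {f n : ℕ → ℕ} (ans : ℕ → Bool)
    (hR : (Set.ofPred (IsRecord (f ∘ n))).Infinite) :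
    f '' {x | ∃ k, (decide (IsRecord (f ∘ n) k) && ans (Nat.count (IsRecord (f ∘ n)) k)) = true ∧
        n k = x} =
      {y | ∃ j, ans j = true ∧ ((f ∘ n) ∘ Nat.nth (IsRecord (f ∘ n))) j = y} := by
  ext y
  simp only [Set.mem_image, Set.mem_ofPred_eq, Bool.and_eq_true, decide_eq_true_eq]
  constructor
  · rintro ⟨_, ⟨k, ⟨hk, hans⟩, rfl⟩, rfl⟩
    exact ⟨_, hans, by simp [Nat.nth_count hk]⟩
  · rintro ⟨j, hans, rfl⟩
    exact ⟨_, ⟨_, ⟨Nat.nth_mem_of_infinite hR j, by rwa [Nat.count_nth_of_infinite hR]⟩, rfl⟩, rfl⟩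

theorem stmt14_general (I J : Set (Set ℕ)) (hI : IsIdealOmega I)
    (hKB : KBBelow J I) (h : TallIIWinStrat J) : TallIIWinStrat I := by
  obtain ⟨f, hf_fin, hf_pre⟩ := hKB
  obtain ⟨τ, hτ⟩ := h
  refine ⟨fun l => recordStrategy τ (l.map f), fun n hn => ?_⟩
  have hg : Tendsto (f ∘ n) atTop atTop :=
    (Nat.cofinite_eq_atTop ▸ Tendsto.cofinite_of_finite_preimage_singleton
      fun m => (hf_fin m).to_subtype).comp hn.tendsto_atTop
  have hR := infinite_isRecord_of_tendsto hg
  obtain ⟨hT_inf, hT_mem⟩ := hτ _ (strictMono_comp_nth_isRecord hR)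
  have himage := image_acceptedMoves_eq
    (fun j => τ ((List.range (j + 1)).map ((f ∘ n) ∘ Nat.nth (IsRecord (f ∘ n))))) hR
  simp only [List.map_map, recordStrategy_map_range]
  exact ⟨fun hS => hT_inf (himage ▸ hS.image f),
    hI.1 _ (hf_pre _ hT_mem) _ (himage ▸ Set.subset_preimage_image f _)⟩

theorem stmt14 (I J : Set (Set ℕ)) (hI : IsIdealOmega I) (hJ : IsIdealOmega J)
    (hKB : KBBelow J I) (h : TallIIWinStrat J) : TallIIWinStrat I :=
  stmt14_general I J hI hKB h
end

section
/- For an ideal I on ω: Player I has a winning strategy in the HMM game with respect to I if and only if Player II has a winning strategy in the tallness game with respect to I. -/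
open Cardinal

/-- Player I has a winning strategy in the HMM game with respect to `I`:
Player I plays finite sets `F_k`, Player II must respond with `n_k ∉ F_k`;
Player I wins if `{n_k : k ∈ ω} ∈ I`. -/
def HMMIWinStrat (I : Set (Set ℕ)) : Prop :=
  ∃ σ : List ℕ → Finset ℕ, ∀ n : ℕ → ℕ,
    (∀ k, n k ∉ σ ((List.range k).map n)) → Set.range n ∈ I

/-!
(⇒) Player II accepts a number exactly when it is a legal answer to `σ` in the HMM play formed by
the numbers accepted so far. The accepted numbers then form a play against `σ`, hence a set in `I`,
and there are infinitely many of them: otherwise the finite set forbidden by `σ` would eventually be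
constant, while Player I's moves grow without bound.

(⇐) Call a strictly increasing position accepting if `τ` accepts every larger next move. Every
position extends to an accepting one, since otherwise Player I could make `τ` reject forever.
Player I keeps an accepting position and forbids every number up to its maximum, so each answer of
Player II is accepted by `τ` and can be extended to a new accepting position. These positions
converge to a tallness play in which `τ` accepts all of Player II's answers.
-/

namespace List

theorem isPrefix_of_isPrefix_succ {α : Type*} {L : ℕ → List α} (hL : ∀ k, L k <+: L (k + 1))
    {k k' : ℕ} (h : k ≤ k') : L k <+: L k' := by
  induction k', h using Nat.le_induction with
  | base => exact prefix_refl _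
  | succ k' _ ih => exact ih.trans (hL k')

theorem exists_map_range_eq_of_isPrefix {α : Type*} [Inhabited α] {L : ℕ → List α}
    (hL : ∀ k, L k <+: L (k + 1)) (hlen : ∀ k, k ≤ (L k).length) :
    ∃ r : ℕ → α, ∀ k, (range (L k).length).map r = L k := by
  refine ⟨fun j => (L (j + 1)).getD j default, fun k => ext_getElem (by simp) fun i hi hik => ?_⟩
  have hi' : i < (L (i + 1)).length := hlen (i + 1)
  simp only [getElem_map, getElem_range, getD_eq_getElem _ _ hi']
  rcases le_total (i + 1) k with h | h
  · exact (isPrefix_of_isPrefix_succ hL h).getElem hi'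
  · exact ((isPrefix_of_isPrefix_succ hL h).getElem hik).symm

theorem map_range_succ {α : Type*} (f : ℕ → α) (k : ℕ) :
    (range (k + 1)).map f = (range k).map f ++ [f k] := by
  rw [range_succ, map_append, map_singleton]

theorem map_range_length_eq_of_isPrefix {α : Type*} {f : ℕ → α} {l : List α} {N : ℕ}
    (h : l <+: (range N).map f) : (range l.length).map f = l := by
  conv_rhs => rw [prefix_iff_eq_take.1 h]
  rw [← map_take, take_range, min_eq_left (by simpa using h.length_le)]

theorem IsChain.append_singleton {α : Type*} {R : α → α → Prop} {l : List α} {m : α}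
    (hl : l.IsChain R) (h : ∀ x ∈ l, R x m) : (l ++ [m]).IsChain R :=
  hl.append (isChain_singleton m) fun x hx y hy => by
    rw [head?_cons, Option.mem_some_iff] at hy
    exact hy ▸ h x (mem_of_mem_getLast? hx)

end List

theorem strictMono_of_isChain_map_range {r : ℕ → ℕ}
    (h : ∀ k, ∃ j, k < j ∧ ((List.range j).map r).IsChain (· < ·)) : StrictMono r := by
  refine strictMono_nat_of_lt_succ fun i => ?_
  obtain ⟨j, hij, hchain⟩ := h (i + 1)
  rw [List.isChain_map, List.isChain_range] at hchain
  exact hchain i (by omega)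

abbrev TallAccepts (τ : List ℕ → Bool) (n : ℕ → ℕ) (k : ℕ) : Prop :=
  τ ((List.range (k + 1)).map n) = true

section HMMToTall

variable (σ : List ℕ → Finset ℕ)

def hmmRun (l : List ℕ) : List ℕ :=
  l.foldl (fun a m => if m ∈ σ a then a else a ++ [m]) []

theorem hmmRun_append_singleton (l : List ℕ) (m : ℕ) :
    hmmRun σ (l ++ [m]) = if m ∈ σ (hmmRun σ l) then hmmRun σ l else hmmRun σ l ++ [m] := by
  rw [hmmRun, hmmRun, List.foldl_append]
  rfl

def tallStrategyOfHMM (l : List ℕ) : Bool :=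
  decide (l.getLastD 0 ∉ σ (hmmRun σ l.dropLast))

variable {σ} {n : ℕ → ℕ}

theorem tallAccepts_tallStrategyOfHMM_iff {k : ℕ} :
    TallAccepts (tallStrategyOfHMM σ) n k ↔ n k ∉ σ (hmmRun σ ((List.range k).map n)) := by
  simp [TallAccepts, tallStrategyOfHMM, List.map_range_succ]

theorem hmmRun_map_range (k : ℕ) :
    hmmRun σ ((List.range k).map n) =
      (List.range (Nat.count (TallAccepts (tallStrategyOfHMM σ) n) k)).map
        (n ∘ Nat.nth (TallAccepts (tallStrategyOfHMM σ) n)) := by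
  induction k with
  | zero => rfl
  | succ k ih =>
    rw [List.map_range_succ, hmmRun_append_singleton, Nat.count_succ]
    by_cases hk : TallAccepts (tallStrategyOfHMM σ) n k
    · rw [if_neg (tallAccepts_tallStrategyOfHMM_iff.1 hk), if_pos hk, List.map_range_succ, ih,
        Function.comp_apply, Nat.nth_count hk]
    · rw [if_pos (not_not.1 (mt tallAccepts_tallStrategyOfHMM_iff.2 hk)), if_neg hk, add_zero, ih]

theorem infinite_setOf_tallAccepts_tallStrategyOfHMM (hn : StrictMono n) :
    {k | TallAccepts (tallStrategyOfHMM σ) n k}.Infinite := by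
  intro hfin
  obtain ⟨K, hK⟩ := hfin.bddAbove
  have hcount : ∀ i, Nat.count (TallAccepts (tallStrategyOfHMM σ) n) (K + 1 + i) =
      Nat.count (TallAccepts (tallStrategyOfHMM σ) n) (K + 1) := by
    intro i
    induction i with
    | zero => rfl
    | succ i ih =>
      rw [← add_assoc, Nat.count_succ, ih, if_neg fun h => by have := hK h; omega, add_zero]
  set a := hmmRun σ ((List.range (K + 1)).map n)
  obtain ⟨k, hk⟩ : ∃ k, k = K + 1 + ((σ a).sup id + 1) := ⟨_, rfl⟩
  have hnk : n k ∉ σ a := fun h => by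
    have : n k ≤ (σ a).sup id := Finset.le_sup (f := id) h
    have : k ≤ n k := hn.le_apply
    omega
  have hacc : TallAccepts (tallStrategyOfHMM σ) n k := by
    rw [tallAccepts_tallStrategyOfHMM_iff, hmmRun_map_range, hk, hcount, ← hmmRun_map_range,
      ← hk]
    exact hnk
  have := hK hacc
  omega

end HMMToTall

theorem tallIIWinStrat_of_hmmIWinStrat {I : Set (Set ℕ)} : HMMIWinStrat I → TallIIWinStrat I := by
  rintro ⟨σ, hσ⟩
  refine ⟨tallStrategyOfHMM σ, fun n hn => ?_⟩
  set P := TallAccepts (tallStrategyOfHMM σ) n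
  have hinf : {k | P k}.Infinite := infinite_setOf_tallAccepts_tallStrategyOfHMM hn
  have hset : {m | ∃ k, P k ∧ n k = m} = Set.range (n ∘ Nat.nth P) := by
    rw [Set.range_comp, Nat.range_nth_of_infinite hinf]
    rfl
  have hlegal : ∀ j, (n ∘ Nat.nth P) j ∉ σ ((List.range j).map (n ∘ Nat.nth P)) := by
    intro j
    have := tallAccepts_tallStrategyOfHMM_iff.1 (Nat.nth_mem_of_infinite hinf j)
    rwa [hmmRun_map_range, Nat.count_nth_of_infinite hinf] at this
  show {m | ∃ k, P k ∧ n k = m}.Infinite ∧ {m | ∃ k, P k ∧ n k = m} ∈ I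
  rw [hset]
  exact ⟨Set.infinite_range_of_injective (hn.comp (Nat.nth_strictMono hinf)).injective, hσ _ hlegal⟩

section TallToHMM

variable {τ : List ℕ → Bool}

def IsAcceptingPosition (τ : List ℕ → Bool) (t : List ℕ) : Prop :=
  t.IsChain (· < ·) ∧ ∀ m, (∀ x ∈ t, x < m) → τ (t ++ [m]) = true

theorem exists_strictMono_not_tallAccepts {s : List ℕ} (hs : s.IsChain (· < ·)) (g : List ℕ → ℕ)
    (hg : ∀ t, s <+: t → t.IsChain (· < ·) → (∀ x ∈ t, x < g t) ∧ τ (t ++ [g t]) = false) :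
    ∃ r, StrictMono r ∧ ∀ j, s.length ≤ j → ¬ TallAccepts τ r j := by
  set F : ℕ → List ℕ := fun k => (fun t => t ++ [g t])^[k] s
  have hFsucc : ∀ k, F (k + 1) = F k ++ [g (F k)] := fun k => Function.iterate_succ_apply' _ _ _
  have hF : ∀ k, s <+: F k ∧ (F k).IsChain (· < ·) ∧ (F k).length = s.length + k := by
    intro k
    induction k with
    | zero => exact ⟨List.prefix_refl _, hs, rfl⟩
    | succ k ih =>
      obtain ⟨hpre, hchain, hlen⟩ := ih
      rw [hFsucc]
      refine ⟨hpre.trans (List.prefix_append _ _), hchain.append_singleton (hg _ hpre hchain).1, ?_⟩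
      simp [hlen, add_assoc]
  obtain ⟨r, hr⟩ := List.exists_map_range_eq_of_isPrefix (L := F)
    (fun k => hFsucc k ▸ List.prefix_append _ _) (fun k => by rw [(hF k).2.2]; omega)
  refine ⟨r, strictMono_of_isChain_map_range fun k =>
    ⟨(F (k + 1)).length, by rw [(hF _).2.2]; omega, (hr (k + 1)).symm ▸ (hF (k + 1)).2.1⟩, ?_⟩
  intro j hj
  obtain ⟨k, rfl⟩ : ∃ k, j = s.length + k := ⟨j - s.length, by omega⟩
  have hrun : (List.range (s.length + k + 1)).map r = F (k + 1) := by
    rw [← hr, (hF _).2.2, add_assoc]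
  rw [TallAccepts, hrun, hFsucc, (hg _ (hF k).1 (hF k).2.1).2]
  exact Bool.false_ne_true

theorem exists_isAcceptingPosition_extension
    (hτ : ∀ n : ℕ → ℕ, StrictMono n → {m | ∃ k, TallAccepts τ n k ∧ n k = m}.Infinite)
    {s : List ℕ} (hs : s.IsChain (· < ·)) : ∃ t, s <+: t ∧ IsAcceptingPosition τ t := by
  by_contra! hno
  have hrej : ∀ t, ∃ m, s <+: t → t.IsChain (· < ·) → (∀ x ∈ t, x < m) ∧ τ (t ++ [m]) = false := by
    intro t
    by_cases ht : s <+: t ∧ t.IsChain (· < ·)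
    · obtain ⟨m, hm, hfalse⟩ : ∃ m, (∀ x ∈ t, x < m) ∧ τ (t ++ [m]) ≠ true := by
        simpa [IsAcceptingPosition, ht.2] using hno t ht.1
      exact ⟨m, fun _ _ => ⟨hm, by simpa using hfalse⟩⟩
    · exact ⟨0, fun h1 h2 => absurd ⟨h1, h2⟩ ht⟩
  choose g hg using hrej
  obtain ⟨r, hr, hrej⟩ := exists_strictMono_not_tallAccepts hs g hg
  refine hτ r hr (((Set.finite_Iio s.length).image r).subset ?_)
  rintro _ ⟨j, hj, rfl⟩
  exact ⟨j, not_le.1 fun h => hrej j h hj, rfl⟩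

variable (ext : List ℕ → List ℕ)

def positionAfter (l : List ℕ) : List ℕ :=
  l.foldl (fun t m => ext (t ++ [m])) (ext [])

theorem positionAfter_append_singleton (l : List ℕ) (m : ℕ) :
    positionAfter ext (l ++ [m]) = ext (positionAfter ext l ++ [m]) := by
  simp [positionAfter]

-- The sum bounds every entry of the position, so Player II must answer above all of them.
def hmmStrategyOfTall (l : List ℕ) : Finset ℕ :=
  Finset.range ((positionAfter ext l).sum + 1)

variable {ext}

theorem isAcceptingPosition_positionAfter
    (hext : ∀ s, s.IsChain (· < ·) → s <+: ext s ∧ IsAcceptingPosition τ (ext s))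
    {n : ℕ → ℕ} (hn : ∀ k, n k ∉ hmmStrategyOfTall ext ((List.range k).map n)) (k : ℕ) :
    IsAcceptingPosition τ (positionAfter ext ((List.range k).map n)) ∧
      (∀ x ∈ positionAfter ext ((List.range k).map n), x < n k) ∧
      positionAfter ext ((List.range k).map n) ++ [n k] <+:
        positionAfter ext ((List.range (k + 1)).map n) := by
  have hbig : ∀ k, ∀ x ∈ positionAfter ext ((List.range k).map n), x < n k := fun k x hx => by
    have := not_lt.1 (Finset.mem_range.not.1 (hn k))
    have := List.le_sum_of_mem hx
    omega
  have hgood : IsAcceptingPosition τ (positionAfter ext ((List.range k).map n)) := by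
    induction k with
    | zero => exact (hext [] List.isChain_nil).2
    | succ k ih =>
      rw [List.map_range_succ, positionAfter_append_singleton]
      exact (hext _ (ih.1.append_singleton (hbig k))).2
  refine ⟨hgood, hbig k, ?_⟩
  rw [List.map_range_succ, positionAfter_append_singleton]
  exact (hext _ (hgood.1.append_singleton (hbig k))).1

theorem exists_strictMono_range_subset_accepted
    (hext : ∀ s, s.IsChain (· < ·) → s <+: ext s ∧ IsAcceptingPosition τ (ext s))
    {n : ℕ → ℕ} (hn : ∀ k, n k ∉ hmmStrategyOfTall ext ((List.range k).map n)) :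
    ∃ r, StrictMono r ∧ Set.range n ⊆ {m | ∃ k, TallAccepts τ r k ∧ r k = m} := by
  set L : ℕ → List ℕ := fun k => positionAfter ext ((List.range k).map n)
  have hL : ∀ k, IsAcceptingPosition τ (L k) ∧ (∀ x ∈ L k, x < n k) ∧ L k ++ [n k] <+: L (k + 1) :=
    isAcceptingPosition_positionAfter hext hn
  have hlen : ∀ k, k ≤ (L k).length := by
    intro k
    induction k with
    | zero => exact Nat.zero_le _
    | succ k ih =>
      have := (hL k).2.2.length_le
      simp only [List.length_append, List.length_singleton] at this
      omega
  obtain ⟨r, hr⟩ := List.exists_map_range_eq_of_isPrefix (L := L)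
    (fun k => (List.prefix_append _ _).trans (hL k).2.2) hlen
  refine ⟨r, strictMono_of_isChain_map_range fun k =>
    ⟨(L (k + 1)).length, hlen (k + 1), (hr (k + 1)).symm ▸ (hL (k + 1)).1.1⟩, ?_⟩
  rintro _ ⟨k, rfl⟩
  have hrun : (List.range ((L k).length + 1)).map r = L k ++ [n k] := by
    have := List.map_range_length_eq_of_isPrefix (hr (k + 1) ▸ (hL k).2.2)
    rwa [List.length_append, List.length_singleton] at this
  refine ⟨(L k).length, ?_, ?_⟩
  · rw [TallAccepts, hrun]
    exact (hL k).1.2 (n k) (hL k).2.1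
  · rw [List.map_range_succ, hr k] at hrun
    exact (List.append_singleton_inj.1 hrun).2

end TallToHMM

theorem hmmIWinStrat_of_tallIIWinStrat {I : Set (Set ℕ)} (hI : ∀ A ∈ I, ∀ B ⊆ A, B ∈ I) :
    TallIIWinStrat I → HMMIWinStrat I := by
  rintro ⟨τ, hτ⟩
  choose! ext hext using fun (s : List ℕ) (hs : s.IsChain (· < ·)) =>
    exists_isAcceptingPosition_extension (fun n hn => (hτ n hn).1) hs
  refine ⟨hmmStrategyOfTall ext, fun n hn => ?_⟩
  obtain ⟨r, hr, hsub⟩ := exists_strictMono_range_subset_accepted hext hn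
  exact hI _ (hτ r hr).2 _ hsub

theorem stmt15 (I : Set (Set ℕ)) (hI : IsIdealOmega I) :
    HMMIWinStrat I ↔ TallIIWinStrat I :=
  ⟨tallIIWinStrat_of_hmmIWinStrat, hmmIWinStrat_of_tallIIWinStrat hI.1⟩
end

section
/- For an ideal I on ω, Player I has no winning strategy in the tallness* game with respect to I if and only if for every sequence ⟨X_n : n ∈ ω⟩ of I-positive sets there exists A ∈ I with A ∩ X_n infinite for every n. -/
/-!
If Player I has a winning strategy `σ`, then for every finite history `s` the moves `σ` makes when
Player II answers `s` and then always `0` form an `I`-positive set, since otherwise Player II wins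
by answering that way. A set `A ∈ I` meeting each of these countably many sets defeats `σ`:
Player II answers `1` exactly when Player I plays into `A`.

Conversely, let the `X n` be `I`-positive with every `A ∈ I` almost disjoint from some `X n`.
Player I plays the next element of the current `X n`, and moves on to the next set of an
enumeration listing every `X n` infinitely often whenever Player II answers `1`. If Player II
answers `1` finitely often, the play contains a tail of some `X n`; otherwise the moves answered by
`1` meet every `X n` infinitely often, so they are `I`-positive.
-/

open Cardinal

/-- Player II wins a play of the tallness* game with respect to `I`. -/
def TallStarIIWins (I : Set (Set ℕ)) (n : ℕ → ℕ) (i : ℕ → Bool) : Prop :=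
  Set.range n ∈ I ∨
    (Set.range n ∉ I ∧ {m | ∃ k, i k = true ∧ n k = m}.Infinite ∧
      {m | ∃ k, i k = true ∧ n k = m} ∈ I)

/-- Player I has a winning strategy in the tallness* game with respect to `I`. -/
def TallStarIWinStrat (I : Set (Set ℕ)) : Prop :=
  ∃ σ : List Bool → ℕ, ∀ i : ℕ → Bool,
    StrictMono (fun k => σ ((List.range k).map i)) ∧
    ¬ TallStarIIWins I (fun k => σ ((List.range k).map i)) i

open Set

namespace IsIdealOmega

variable {I : Set (Set ℕ)}

theorem mem_of_diff_finite (hI : IsIdealOmega I) {X Y : Set ℕ} (hY : Y ∈ I)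
    (hXY : (X \ Y).Finite) : X ∈ I :=
  hI.1 _ (hI.2.1 _ (hI.2.2.1 _ hXY) _ hY) _ (by rw [sdiff_union_self]; exact subset_union_left)

theorem infinite_of_notMem (hI : IsIdealOmega I) {X : Set ℕ} (hX : X ∉ I) : X.Infinite :=
  fun hfin => hX (hI.2.2.1 X hfin)

end IsIdealOmega

theorem Nat.count_congr {p q : ℕ → Prop} [DecidablePred p] [DecidablePred q] {n : ℕ}
    (h : ∀ k < n, p k ↔ q k) : Nat.count p n = Nat.count q n :=
  (Nat.count_mono_left fun k hk => (h k hk).1).antisymm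
    (Nat.count_mono_left fun k hk => (h k hk).2)

theorem List.map_range_getD_eq_append_replicate {α : Type*} (s : List α) (d : α) {k : ℕ}
    (hk : s.length ≤ k) :
    (List.range k).map (fun j => s.getD j d) = s ++ List.replicate (k - s.length) d := by
  refine List.ext_getElem (by simp; omega) fun j _ _ => ?_
  simp only [List.getElem_map, List.getElem_range, List.getElem_append, List.getElem_replicate,
    List.getD_eq_getElem?_getD]
  split_ifs with hj <;> simp [hj]

theorem exists_strategy_of_causal (f : (ℕ → Bool) → ℕ → ℕ)
    (hf : ∀ i i' k, (∀ j < k, i j = i' j) → f i k = f i' k) :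
    ∃ σ : List Bool → ℕ, ∀ i k, σ ((List.range k).map i) = f i k :=
  ⟨fun l => f (fun j => l.getD j false) l.length, fun i k => by
    simp only [List.length_map, List.length_range]
    exact hf _ _ k fun j hj => by simp [hj]⟩

theorem exists_answers_of_rule (σ : List Bool → ℕ) (r : ℕ → Bool) :
    ∃ i : ℕ → Bool, ∀ k, i k = r (σ ((List.range k).map i)) := by
  let hist : ℕ → List Bool := fun k => Nat.rec [] (fun _ h => h ++ [r (σ h)]) k
  refine ⟨fun k => r (σ (hist k)), fun k => ?_⟩
  suffices h : ∀ k, (List.range k).map (fun k => r (σ (hist k))) = hist k by rw [h]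
  intro k
  induction k with
  | zero => rfl
  | succ k ih => rw [List.range_succ, List.map_append, ih]; rfl

-- `(Nat.unpair c).1` takes every value infinitely often; `c` counts the `true` answers so far.
noncomputable def chase (X : ℕ → Set ℕ) (i : ℕ → Bool) : ℕ → ℕ
  | 0 => sInf (X (Nat.unpair 0).1)
  | k + 1 => sInf {m | m ∈ X (Nat.unpair (Nat.count (i · = true) (k + 1))).1 ∧ chase X i k < m}

section chase

variable {X : ℕ → Set ℕ} {i : ℕ → Bool}

theorem chase_congr (X : ℕ → Set ℕ) {i i' : ℕ → Bool} :
    ∀ {k}, (∀ j < k, i j = i' j) → chase X i k = chase X i' k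
  | 0, _ => rfl
  | k + 1, h => by
    rw [chase, chase, Nat.count_congr fun j hj => by rw [h j hj],
      chase_congr X fun j hj => h j (by omega)]

theorem chase_succ_mem (hX : ∀ n, (X n).Infinite) (i : ℕ → Bool) (k : ℕ) :
    chase X i (k + 1) ∈ X (Nat.unpair (Nat.count (i · = true) (k + 1))).1 ∧
      chase X i k < chase X i (k + 1) :=
  let ⟨m, hm, hlt⟩ := (hX _).exists_gt (chase X i k)
  Nat.sInf_mem (s := {m | m ∈ _ ∧ _}) ⟨m, hm, hlt⟩

theorem chase_mem (hX : ∀ n, (X n).Infinite) (i : ℕ → Bool) :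
    ∀ k, chase X i k ∈ X (Nat.unpair (Nat.count (i · = true) k)).1
  | 0 => by rw [Nat.count_zero]; exact Nat.sInf_mem (hX _).nonempty
  | k + 1 => (chase_succ_mem hX i k).1

theorem chase_strictMono (hX : ∀ n, (X n).Infinite) (i : ℕ → Bool) : StrictMono (chase X i) :=
  strictMono_nat_of_lt_succ fun k => (chase_succ_mem hX i k).2

theorem chase_succ_le {k m : ℕ} (hm : m ∈ X (Nat.unpair (Nat.count (i · = true) (k + 1))).1)
    (hlt : chase X i k < m) : chase X i (k + 1) ≤ m :=
  Nat.sInf_le ⟨hm, hlt⟩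

theorem range_chase_notMem {I : Set (Set ℕ)} (hI : IsIdealOmega I) (hXI : ∀ n, X n ∉ I)
    (hfin : {k | i k = true}.Finite) : range (chase X i) ∉ I := by
  have hmono := chase_strictMono (fun n => hI.infinite_of_notMem (hXI n)) i
  obtain ⟨K, hK⟩ := hfin.bddAbove
  have hcount : ∀ k, K < k → Nat.count (i · = true) k = Nat.count (i · = true) (K + 1) := by
    intro k hk
    refine le_antisymm (not_lt.1 fun hlt => ?_) (Nat.count_monotone _ hk)
    obtain ⟨j, hj, hij⟩ := Nat.exists_of_count_lt_count hlt
    exact absurd (hK hij) (by simp at hj; omega)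
  intro hr
  refine hXI (Nat.unpair (Nat.count (i · = true) (K + 1))).1
    (hI.mem_of_diff_finite hr ((finite_Iic (chase X i (K + 1))).subset ?_))
  rintro m ⟨hm, hmr⟩
  by_contra hlt
  replace hlt : chase X i (K + 1) < m := not_le.1 hlt
  obtain ⟨k, hk, hk'⟩ := hmono.exists_between_of_tendsto_atTop hmono.tendsto_atTop
    ((hmono.monotone (Nat.zero_le _)).trans_lt hlt)
  have hKk : K < k + 1 := by
    by_contra! h
    exact (hk'.trans (hmono.monotone (h.trans K.le_succ))).not_gt hlt
  exact hmr ⟨k + 1, le_antisymm (chase_succ_le (by rwa [hcount _ hKk]) hk) hk'⟩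

theorem infinite_image_chase_inter (hX : ∀ n, (X n).Infinite)
    (hinf : {k | i k = true}.Infinite) (n : ℕ) :
    (chase X i '' {k | i k = true} ∩ X n).Infinite := by
  refine infinite_of_injective_forall_mem
    (f := fun m => chase X i (Nat.nth (i · = true) (Nat.pair n m))) ?_ fun m => ?_
  · exact (chase_strictMono hX i).injective.comp <|
      (Nat.nth_injective hinf).comp fun a b h => (Nat.pair_eq_pair.1 h).2
  · refine ⟨⟨_, Nat.nth_mem_of_infinite hinf _, rfl⟩, ?_⟩
    simpa [Nat.count_nth_of_infinite hinf] using
      chase_mem hX i (Nat.nth (i · = true) (Nat.pair n m))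

end chase

theorem tallStarIWinStrat_of_forall_exists_finite_inter {I : Set (Set ℕ)} (hI : IsIdealOmega I)
    {X : ℕ → Set ℕ} (hXI : ∀ n, X n ∉ I) (hsmall : ∀ A ∈ I, ∃ n, (A ∩ X n).Finite) :
    TallStarIWinStrat I := by
  have hX n := hI.infinite_of_notMem (hXI n)
  obtain ⟨σ, hσ⟩ := exists_strategy_of_causal (chase X) fun _ _ _ => chase_congr X
  refine ⟨σ, fun i => ?_⟩
  simp only [hσ]
  refine ⟨chase_strictMono hX i, ?_⟩
  rcases Set.finite_or_infinite {k | i k = true} with hfin | hinf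
  · rintro (hr | ⟨-, hB, -⟩)
    · exact range_chase_notMem hI hXI hfin hr
    · exact hB (hfin.image _)
  · have hB : chase X i '' {k | i k = true} ∉ I := fun hB =>
      let ⟨n, hn⟩ := hsmall _ hB
      infinite_image_chase_inter hX hinf n hn
    rintro (hr | ⟨-, -, hB'⟩)
    · exact hB (hI.1 _ hr _ (image_subset_range _ _))
    · exact hB hB'

theorem range_strategy_append_replicate_notMem {I : Set (Set ℕ)} (hI : IsIdealOmega I)
    {σ : List Bool → ℕ} (hσ : ∀ i, ¬ TallStarIIWins I (fun k => σ ((List.range k).map i)) i)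
    (s : List Bool) : range (fun m => σ (s ++ List.replicate m false)) ∉ I := by
  intro hY
  apply hσ (fun j => s.getD j false)
  refine Or.inl (hI.mem_of_diff_finite hY (((finite_Iio s.length).image
    fun k => σ ((List.range k).map fun j => s.getD j false)).subset ?_))
  rintro _ ⟨⟨k, rfl⟩, hk⟩
  refine ⟨k, mem_Iio.2 <| lt_of_not_ge fun hsk => hk ⟨k - s.length, ?_⟩, rfl⟩
  simp only [List.map_range_getD_eq_append_replicate s false hsk]

theorem not_tallStarIWinStrat_of_forall_exists_infinite_inter {I : Set (Set ℕ)}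
    (hI : IsIdealOmega I)
    (hlarge : ∀ X : ℕ → Set ℕ, (∀ n, X n ∉ I) → ∃ A ∈ I, ∀ n, (A ∩ X n).Infinite) :
    ¬ TallStarIWinStrat I := by
  classical
  rintro ⟨σ, hσ⟩
  obtain ⟨A, hAI, hA⟩ := hlarge
    (fun n => range fun m => σ ((Encodable.decode n).getD [] ++ List.replicate m false))
    fun n => range_strategy_append_replicate_notMem hI (fun i => (hσ i).2) _
  have hAs (s : List Bool) : ∃ m, σ (s ++ List.replicate m false) ∈ A := by
    obtain ⟨_, hxA, m, rfl⟩ := (hA (Encodable.encode s)).nonempty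
    exact ⟨m, by simpa using hxA⟩
  obtain ⟨i, hi⟩ := exists_answers_of_rule σ fun m => decide (m ∈ A)
  have hinf : {k | i k = true}.Infinite := by
    intro hfin
    obtain ⟨K, hK⟩ := hfin.bddAbove
    have hfalse (j : ℕ) : i (K + 1 + j) = false :=
      Bool.eq_false_iff.2 fun h => by have := hK h; omega
    obtain ⟨m, hm⟩ := hAs ((List.range (K + 1)).map i)
    have hplay : (List.range (K + 1 + m)).map i =
        (List.range (K + 1)).map i ++ List.replicate m false := by
      rw [List.range_add, List.map_append, List.map_map]
      congr
      exact List.eq_replicate_iff.2 ⟨by simp, by simp [hfalse]⟩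
    have := hK (show i (K + 1 + m) = true by simpa [hi, hplay] using hm)
    omega
  refine (hσ i).2 ?_
  by_cases hr : range (fun k => σ ((List.range k).map i)) ∈ I
  · exact Or.inl hr
  · refine Or.inr ⟨hr, hinf.image (hσ i).1.injective.injOn, hI.1 A hAI _ ?_⟩
    rintro _ ⟨k, hk, rfl⟩
    simpa [hi k] using hk

theorem stmt17 (I : Set (Set ℕ)) (hI : IsIdealOmega I) :
    ¬ TallStarIWinStrat I ↔
      ∀ X : ℕ → Set ℕ, (∀ n, X n ∉ I) →
        ∃ A ∈ I, ∀ n, (A ∩ X n).Infinite := by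
  refine ⟨fun hnot X hXI => ?_, not_tallStarIWinStrat_of_forall_exists_infinite_inter hI⟩
  by_contra! hsmall
  exact hnot (tallStarIWinStrat_of_forall_exists_finite_inter hI hXI hsmall)
end

section
/- Let I be an ideal on ω such that ED ≤_K I (Katětov below). Then Player II has a winning strategy in the tallness* game with respect to I; equivalently, there is an I*-branching tree T ⊆ ω^{<ω} such that the range of every branch is an infinite member of I. -/
open Cardinal

/-- Membership in the ideal `ED` on `ω × ω`, generated by vertical lines and
graphs of functions. -/
def MemED (S : Set (ℕ × ℕ)) : Prop :=
  ∃ (F : Finset ℕ) (G : Finset (ℕ → ℕ)), ∀ p ∈ S, p.1 ∈ F ∨ ∃ g ∈ G, p.2 = g p.1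

/-- Player II has a winning strategy in the tallness* game with respect to `I`. -/
def TallStarIIWinStrat (I : Set (Set ℕ)) : Prop :=
  ∃ τ : List ℕ → Bool, ∀ n : ℕ → ℕ, StrictMono n →
    TallStarIIWins I n (fun k => τ ((List.range (k + 1)).map n))

/-- `T ⊆ ω^{<ω}` is a (nonempty, prefix-closed) tree. -/
def IsTree (T : Set (List ℕ)) : Prop :=
  [] ∈ T ∧ ∀ s ∈ T, ∀ t : List ℕ, t <+: s → t ∈ T

/-- `T` is `I*`-branching: the set of immediate successors of every node is in
the dual filter of `I`. -/
def DualBranching (I : Set (Set ℕ)) (T : Set (List ℕ)) : Prop :=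
  ∀ s ∈ T, {m | s ++ [m] ∈ T}ᶜ ∈ I

/-- `f` is a branch of `T`. -/
def IsBranch (T : Set (List ℕ)) (f : ℕ → ℕ) : Prop :=
  ∀ k, (List.range k).map f ∈ T

section Aux

variable {I : Set (Set ℕ)} {φ : ℕ → ℕ × ℕ}

lemma memED_columns (F : Finset ℕ) : MemED {p : ℕ × ℕ | p.1 ∈ F} :=
  ⟨F, ∅, fun _ hp => Or.inl hp⟩

lemma memED_graph (g : ℕ → ℕ) : MemED {p : ℕ × ℕ | p.2 = g p.1} :=
  ⟨∅, {g}, fun _ hp => Or.inr ⟨g, Finset.mem_singleton_self g, hp⟩⟩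

lemma col_mem (hφ : ∀ A : Set (ℕ × ℕ), MemED A → φ ⁻¹' A ∈ I) (F : Finset ℕ) :
    {m : ℕ | (φ m).1 ∈ F} ∈ I :=
  hφ _ (memED_columns F)

lemma inj_mem (hI : IsIdealOmega I)
    (hφ : ∀ A : Set (ℕ × ℕ), MemED A → φ ⁻¹' A ∈ I) (S : Set ℕ)
    (hS : Set.InjOn (fun m => (φ m).1) S) : S ∈ I := by
  classical
  set g : ℕ → ℕ := fun a =>
    if h : ∃ m, m ∈ S ∧ (φ m).1 = a then (φ h.choose).2 else 0 with hg
  have hsub : S ⊆ φ ⁻¹' {p : ℕ × ℕ | p.2 = g p.1} := by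
    intro m hm
    have h : ∃ m', m' ∈ S ∧ (φ m').1 = (φ m).1 := ⟨m, hm, rfl⟩
    have h1 := h.choose_spec
    have he : h.choose = m := hS h1.1 hm h1.2
    simp only [Set.mem_preimage, Set.mem_setOf_eq, hg, dif_pos h]
    rw [he]
  exact hI.1 _ (hφ _ (memED_graph g)) S hsub

end Aux

theorem stmt18 (I : Set (Set ℕ)) (hI : IsIdealOmega I)
    (hK : ∃ φ : ℕ → ℕ × ℕ, ∀ A : Set (ℕ × ℕ), MemED A → φ ⁻¹' A ∈ I) :
    TallStarIIWinStrat I ∧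
    ∃ T : Set (List ℕ), IsTree T ∧ DualBranching I T ∧
      ∀ f : ℕ → ℕ, IsBranch T f → Set.range f ∈ I ∧ (Set.range f).Infinite := by
  classical
  obtain ⟨φ, hφ⟩ := hK
  set φ₁ : ℕ → ℕ := fun m => (φ m).1 with hφ₁
  constructor
  · -- winning strategy
    refine ⟨fun l => decide (φ₁ (l.getLastD 0) ∉ l.dropLast.map φ₁), ?_⟩
    intro n hn
    set i : ℕ → Bool :=
      fun k => decide (φ₁ (((List.range (k + 1)).map n).getLastD 0)
        ∉ ((List.range (k + 1)).map n).dropLast.map φ₁) with hi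
    have hik : ∀ k, i k = true ↔ φ₁ (n k) ∉ ((List.range k).map n).map φ₁ := by
      intro k
      have h1 : (List.range (k + 1)).map n = (List.range k).map n ++ [n k] := by
        rw [List.range_succ, List.map_append, List.map_singleton]
      rw [hi]
      simp only [h1, List.dropLast_concat, List.getLastD_concat, decide_eq_true_eq]
    by_cases hN : Set.range n ∈ I
    · exact Or.inl hN
    · refine Or.inr ⟨hN, ?_, ?_⟩
      · -- infinite
        set S := {m | ∃ k, i k = true ∧ n k = m} with hS
        have hV : (φ₁ '' Set.range n).Infinite := by
          intro hfin
          apply hN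
          refine hI.1 _ (col_mem hφ hfin.toFinset) _ ?_
          rintro m ⟨k, rfl⟩
          simp only [Set.mem_setOf_eq, Set.Finite.mem_toFinset]
          exact ⟨n k, ⟨k, rfl⟩, rfl⟩
        have hVS : φ₁ '' Set.range n ⊆ φ₁ '' S := by
          rintro v ⟨m, ⟨k, rfl⟩, rfl⟩
          have hex : ∃ j, φ₁ (n j) = φ₁ (n k) := ⟨k, rfl⟩
          set k₀ := Nat.find hex with hk₀
          refine ⟨n k₀, ⟨k₀, ?_, rfl⟩, Nat.find_spec hex⟩
          rw [hik]
          intro hmem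
          simp only [List.mem_map, List.mem_range] at hmem
          obtain ⟨a, ⟨j, hj, rfl⟩, hje⟩ := hmem
          exact Nat.find_min hex hj (hje.trans (Nat.find_spec hex))
        have : (φ₁ '' S).Infinite := hV.mono hVS
        exact this.of_image φ₁
      · -- in I
        apply inj_mem hI hφ
        rintro m ⟨k, hk, rfl⟩ m' ⟨k', hk', rfl⟩ heq
        rcases lt_trichotomy k k' with h | h | h
        · exfalso
          rw [hik] at hk'
          exact hk' (List.mem_map.2 ⟨n k, List.mem_map.2 ⟨k, List.mem_range.2 h, rfl⟩, heq⟩)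
        · rw [h]
        · exfalso
          rw [hik] at hk
          exact hk (List.mem_map.2 ⟨n k', List.mem_map.2 ⟨k', List.mem_range.2 h, rfl⟩, heq.symm⟩)
  · -- tree
    refine ⟨{s | (s.map φ₁).Nodup}, ⟨by simp, ?_⟩, ?_, ?_⟩
    · intro s hs t ht
      exact List.Nodup.sublist (List.Sublist.map φ₁ ht.sublist) hs
    · intro s hs
      have : {m | s ++ [m] ∈ {s | (s.map φ₁).Nodup}}ᶜ ⊆ {m | φ₁ m ∈ (s.map φ₁).toFinset} := by
        intro m hm
        simp only [Set.mem_compl_iff, Set.mem_setOf_eq, List.map_append,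
          List.map_singleton] at hm
        by_contra hmem
        apply hm
        refine List.Nodup.append hs (List.nodup_singleton _) ?_
        intro a ha hb
        simp only [List.mem_singleton] at hb
        subst hb
        exact hmem (by simpa [List.mem_toFinset] using ha)
      exact hI.1 _ (col_mem hφ _) _ this
    · intro f hf
      have hinj : Function.Injective (φ₁ ∘ f) := by
        intro j k hjk
        have hnd := hf (max j k + 1)
        simp only [Set.mem_setOf_eq, List.map_map] at hnd
        exact List.inj_on_of_nodup_map hnd (List.mem_range.2 (by omega))
          (List.mem_range.2 (by omega)) hjk
      have hfi : Function.Injective f := fun a b h => hinj (by simp [Function.comp, h])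
      refine ⟨?_, Set.infinite_range_of_injective hfi⟩
      apply inj_mem hI hφ
      rintro m ⟨j, rfl⟩ m' ⟨k, rfl⟩ heq
      exact congrArg f (hinj heq)
end
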